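/- arXiv:2008.03930 — 10 statements merged into one kernel-verified Lean document; each statement's English description precedes it below -/
import Mathlib

section
/- Let (X,d,W,η) be a UCW-hyperbolic space and define u(r,ε) := (ε/2)·η(r,ε). Then for all r, ε > 0 and all a, x, y ∈ X with d(x,a) ≤ d(y,a) ≤ r and d(x,y) ≥ εr, one has d(W(x,y,1/2), a) ≤ d(y,a) − u(r,ε)·r. -/
open Filter Topology

theorem stmt2 {X : Type*} [MetricSpace X]
    (W : X → X → ℝ → X)
    (W1 : ∀ x y z : X, ∀ t : ℝ, t ∈ Set.Icc (0:ℝ) 1 →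
      dist z (W x y t) ≤ (1 - t) * dist z x + t * dist z y)
    (W2 : ∀ x y : X, ∀ t s : ℝ, t ∈ Set.Icc (0:ℝ) 1 → s ∈ Set.Icc (0:ℝ) 1 →
      dist (W x y t) (W x y s) = |t - s| * dist x y)
    (W3 : ∀ x y : X, ∀ t : ℝ, t ∈ Set.Icc (0:ℝ) 1 → W x y t = W y x (1 - t))
    (W4 : ∀ x y z w : X, ∀ t : ℝ, t ∈ Set.Icc (0:ℝ) 1 →
      dist (W x z t) (W y w t) ≤ (1 - t) * dist x y + t * dist z w)
    (η : ℝ → ℝ → ℝ)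
    (hη_range : ∀ r ε : ℝ, 0 < r → 0 < ε → η r ε ∈ Set.Ioc (0:ℝ) 1)
    (hη_mod : ∀ r ε : ℝ, 0 < r → 0 < ε → ∀ a x y : X,
      dist x a ≤ r → dist y a ≤ r → ε * r ≤ dist x y →
      dist (W x y (1/2)) a ≤ (1 - η r ε) * r)
    (hη_mono : ∀ r s ε : ℝ, 0 < s → s ≤ r → 0 < ε → η r ε ≤ η s ε) :
    ∀ r ε : ℝ, 0 < r → 0 < ε → ∀ a x y : X,
      dist x a ≤ dist y a → dist y a ≤ r → ε * r ≤ dist x y →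
      dist (W x y (1/2)) a ≤ dist y a - (ε / 2 * η r ε) * r := by
  intro r ε hr hε a x y hxy hyr hd
  set s := dist y a with hs
  have hd2 : dist x y ≤ 2 * s := by
    calc dist x y ≤ dist x a + dist a y := dist_triangle x a y
    _ ≤ s + s := by rw [dist_comm a y]; linarith
    _ = 2 * s := by ring
  have hs2 : ε * r ≤ 2 * s := le_trans hd hd2
  have hspos : 0 < s := by nlinarith
  have hεs : ε * s ≤ dist x y := le_trans (by nlinarith) hd
  have h1 := hη_mod s ε hspos hε a x y hxy (le_refl s) hεs
  have h2 := hη_mono r s ε hspos hyr hε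
  have h3 := (hη_range r ε hr hε).1
  nlinarith [(hη_range s ε hspos hε).1]
end

section
/- With S as defined, for every x ∈ X one has d(Sx, x) ≥ d(Tx, x)/(2(2+k_1)). Consequently Fix(T) = Fix(S). -/
open Filter Topology

theorem stmt5 {X : Type*} [MetricSpace X] [CompleteSpace X] [Nonempty X]
    (W : X → X → ℝ → X)
    (W1 : ∀ x y z : X, ∀ t : ℝ, t ∈ Set.Icc (0:ℝ) 1 →
      dist z (W x y t) ≤ (1 - t) * dist z x + t * dist z y)
    (W2 : ∀ x y : X, ∀ t s : ℝ, t ∈ Set.Icc (0:ℝ) 1 → s ∈ Set.Icc (0:ℝ) 1 →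
      dist (W x y t) (W x y s) = |t - s| * dist x y)
    (W3 : ∀ x y : X, ∀ t : ℝ, t ∈ Set.Icc (0:ℝ) 1 → W x y t = W y x (1 - t))
    (W4 : ∀ x y z w : X, ∀ t : ℝ, t ∈ Set.Icc (0:ℝ) 1 →
      dist (W x z t) (W y w t) ≤ (1 - t) * dist x y + t * dist z w)
    (η : ℝ → ℝ → ℝ)
    (hη_range : ∀ r ε : ℝ, 0 < r → 0 < ε → η r ε ∈ Set.Ioc (0:ℝ) 1)
    (hη_mod : ∀ r ε : ℝ, 0 < r → 0 < ε → ∀ a x y : X,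
      dist x a ≤ r → dist y a ≤ r → ε * r ≤ dist x y →
      dist (W x y (1/2)) a ≤ (1 - η r ε) * r)
    (hη_mono : ∀ r s ε : ℝ, 0 < s → s ≤ r → 0 < ε → η r ε ≤ η s ε)
    (b : ℝ) (hb : 0 < b) (hbd : ∀ x y : X, dist x y ≤ b)
    (T : X → X) (k : ℕ → ℝ)
    (hk_nonneg : ∀ n, 0 ≤ k n)
    (hk_lim : Filter.Tendsto k Filter.atTop (nhds 0))
    (hT : ∀ (x y : X) (n : ℕ), dist (T^[n] x) (T^[n] y) ≤ (1 + k n) * dist x y)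
    (S : X → X)
    (hS_fix : ∀ x : X, T x = x → S x = x)
    (hS_move : ∀ x : X, T x ≠ x → ∃ n : ℕ,
      (k n ≤ min (dist x (T x) / (2*b)) (2 * η b (dist x (T x) / (2*b))) ∧
       k (n+1) ≤ min (dist x (T x) / (2*b)) (2 * η b (dist x (T x) / (2*b)))) ∧
      (∀ n' < n, ¬ (k n' ≤ min (dist x (T x) / (2*b)) (2 * η b (dist x (T x) / (2*b))) ∧
        k (n'+1) ≤ min (dist x (T x) / (2*b)) (2 * η b (dist x (T x) / (2*b))))) ∧
      ∃ m : ℕ, (m = n ∨ m = n + 1) ∧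
        dist (T x) x / (2 + k 1) ≤ dist (T^[m] x) x ∧
        (∀ m' : ℕ, (m' = n ∨ m' = n + 1) → m' < m →
          ¬ (dist (T x) x / (2 + k 1) ≤ dist (T^[m'] x) x)) ∧
        S x = W (T^[m] x) x (1/2)) :
    (∀ x : X, dist (T x) x / (2 * (2 + k 1)) ≤ dist (S x) x) ∧
      {x : X | T x = x} = {x : X | S x = x} := by

  have hk1 : (0:ℝ) < 2 + k 1 := by linarith [hk_nonneg 1]
  have main : ∀ x : X, dist (T x) x / (2 * (2 + k 1)) ≤ dist (S x) x := by
    intro x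
    by_cases hx : T x = x
    · rw [hS_fix x hx, hx]
      simp
    · obtain ⟨n, _, _, m, _, hm1, _, hSx⟩ := hS_move x hx
      set a := T^[m] x with ha
      have ht : (1/2 : ℝ) ∈ Set.Icc (0:ℝ) 1 := by norm_num
      have h1 : dist a (W a x (1/2)) ≤ (1/2) * dist a x := by
        have := W1 a x a (1/2) ht
        simpa using this
      have h2 : dist a x ≤ dist a (W a x (1/2)) + dist (W a x (1/2)) x :=
        dist_triangle _ _ _
      have h3 : (1/2) * dist a x ≤ dist (W a x (1/2)) x := by linarith
      rw [hSx]
      have h4 : dist (T x) x / (2 + k 1) ≤ dist a x := hm1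
      rw [div_le_iff₀ (by positivity)] at h4 ⊢
      calc dist (T x) x ≤ dist a x * (2 + k 1) := h4
        _ ≤ (2 * dist (W a x (1/2)) x) * (2 + k 1) := by
            nlinarith [dist_nonneg (x := W a x (1/2)) (y := x)]
        _ = dist (W a x (1/2)) x * (2 * (2 + k 1)) := by ring
  refine ⟨main, ?_⟩
  ext x
  simp only [Set.mem_setOf_eq]
  constructor
  · exact hS_fix x
  · intro hSx
    have := main x
    rw [hSx] at this
    simp only [dist_self] at this
    have hd : dist (T x) x ≤ 0 := by
      rw [div_le_iff₀ (by positivity)] at this; linarith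
    have := dist_nonneg (x := T x) (y := x)
    have : dist (T x) x = 0 := le_antisymm hd ‹_›
    exact dist_eq_zero.mp this
end

section
/- In the Moloney-type iteration, let u(r,ε) := (ε/2)·η(r,ε). For every p ∈ Fix(S), ε > 0, j, and i ∈ [1, m_j − 1], if d(z_{ij}, z_{(i+1)j}) ≥ ε then d(z_{ij}, p) − d(z_{(i+1)j}, p) ≥ u(b, ε/b)·b. -/
open Filter Topology

def CaseI {X : Type*} [MetricSpace X] (W : X → X → ℝ → X) (S : X → X)
    (z : ℕ → ℕ → X) (m : ℕ → ℕ) (j i : ℕ) : Prop :=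
  2 ≤ i ∧ i + 1 ≤ m j ∧
    dist (z i j) (z (i+1) j) < dist (z i j) (z (i-1) j) ∧
    dist (z i j) (z (i-1) j) ≤ dist (z i j) (W (z i j) (S (z (m j) j)) (1/2))

theorem stmt9 {X : Type*} [MetricSpace X] [CompleteSpace X] [Nonempty X]
    (W : X → X → ℝ → X)
    (W1 : ∀ x y z : X, ∀ t : ℝ, t ∈ Set.Icc (0:ℝ) 1 →
      dist z (W x y t) ≤ (1 - t) * dist z x + t * dist z y)
    (W2 : ∀ x y : X, ∀ t s : ℝ, t ∈ Set.Icc (0:ℝ) 1 → s ∈ Set.Icc (0:ℝ) 1 →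
      dist (W x y t) (W x y s) = |t - s| * dist x y)
    (W3 : ∀ x y : X, ∀ t : ℝ, t ∈ Set.Icc (0:ℝ) 1 → W x y t = W y x (1 - t))
    (W4 : ∀ x y z w : X, ∀ t : ℝ, t ∈ Set.Icc (0:ℝ) 1 →
      dist (W x z t) (W y w t) ≤ (1 - t) * dist x y + t * dist z w)
    (η : ℝ → ℝ → ℝ)
    (hη_range : ∀ r ε : ℝ, 0 < r → 0 < ε → η r ε ∈ Set.Ioc (0:ℝ) 1)
    (hη_mod : ∀ r ε : ℝ, 0 < r → 0 < ε → ∀ a x y : X,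
      dist x a ≤ r → dist y a ≤ r → ε * r ≤ dist x y →
      dist (W x y (1/2)) a ≤ (1 - η r ε) * r)
    (hη_mono : ∀ r s ε : ℝ, 0 < s → s ≤ r → 0 < ε → η r ε ≤ η s ε)
    (b : ℝ) (hb : 0 < b) (hbd : ∀ x y : X, dist x y ≤ b)
    (S : X → X) (x0 : X)
    (hfix_ne : ∃ p : X, S p = p)
    (hS_nonexp : ∀ (x p : X), S p = p → dist (S x) p ≤ dist x p)
    (z : ℕ → ℕ → X) (m : ℕ → ℕ)
    (hm1 : m 1 = 1) (hz11 : z 1 1 = x0)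
    (hm_ge : ∀ j, 1 ≤ j → 1 ≤ m j)
    (hstepI : ∀ j, 1 ≤ j → ∀ i : ℕ, CaseI W S z m j i →
      (∀ i' < i, ¬ CaseI W S z m j i') →
      m (j+1) = i + 1 ∧ (∀ q ≤ i, z q (j+1) = z q j) ∧
        z (i+1) (j+1) = W (z i j) (S (z (m j) j)) (1/2))
    (hstepII : ∀ j, 1 ≤ j → (∀ i : ℕ, ¬ CaseI W S z m j i) →
      m (j+1) = m j + 1 ∧ (∀ q ≤ m j, z q (j+1) = z q j) ∧
        z (m j + 1) (j+1) = W (z (m j) j) (S (z (m j) j)) (1/2)) :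
    ∀ q : X, S q = q → ∀ ε : ℝ, 0 < ε → ∀ j, 1 ≤ j → ∀ i : ℕ, 1 ≤ i → i + 1 ≤ m j →
      ε ≤ dist (z i j) (z (i+1) j) →
      (ε / b / 2 * η b (ε / b)) * b ≤ dist (z i j) q - dist (z (i+1) j) q := by

  classical
  -- W x y 0 = x
  have hW0 : ∀ x y : X, W x y 0 = x := by
    intro x y
    have h := W1 x y x 0 (by constructor <;> norm_num)
    simp at h
    exact h.symm
  have hhalf : ∀ x y : X, dist x (W x y (1/2)) = (1/2) * dist x y := by
    intro x y
    have h := W2 x y 0 (1/2) (by norm_num) (by norm_num)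
    rw [hW0] at h
    rw [h]
    norm_num
  have hstepdist : ∀ (a w p : X), dist w p ≤ dist a p →
      dist (W a w (1/2)) p ≤ dist a p := by
    intro a w p hwp
    have h := W1 a w p (1/2) (by norm_num)
    rw [dist_comm p a, dist_comm p w] at h
    rw [dist_comm (W a w (1/2)) p]
    linarith
  -- monotonicity along a row, from the structural property of the row
  have hmonoOf : ∀ jj : ℕ, (∀ i : ℕ, 1 ≤ i → i + 1 ≤ m jj →
      ∃ w : X, z (i+1) jj = W (z i jj) w (1/2) ∧
        ∀ p : X, S p = p → dist w p ≤ dist (z i jj) p) →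
      ∀ p : X, S p = p → ∀ a bb : ℕ, 1 ≤ a → a ≤ bb → bb ≤ m jj →
        dist (z bb jj) p ≤ dist (z a jj) p := by
    intro jj hQj p hp a bb h1 hab
    induction bb, hab using Nat.le_induction with
    | base => intro _; exact le_rfl
    | succ n hn ih =>
      intro hbm
      obtain ⟨w, hw, hwp⟩ := hQj n (le_trans h1 hn) hbm
      rw [hw]
      exact le_trans (hstepdist (z n jj) w p (hwp p hp))
        (ih (le_trans (Nat.le_succ n) hbm))
  -- structural property of the rows
  have hQ : ∀ j : ℕ, 1 ≤ j → ∀ i : ℕ, 1 ≤ i → i + 1 ≤ m j →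
      ∃ w : X, z (i+1) j = W (z i j) w (1/2) ∧
        ∀ p : X, S p = p → dist w p ≤ dist (z i j) p := by
    intro j hj
    induction j, hj using Nat.le_induction with
    | base =>
      intro i h1 h2
      rw [hm1] at h2
      omega
    | succ n hn ih =>
      by_cases hex : ∃ i, CaseI W S z m n i
      · obtain ⟨i₀, hspec, hmin⟩ : ∃ i₀, CaseI W S z m n i₀ ∧
            ∀ i' < i₀, ¬ CaseI W S z m n i' :=
          ⟨Nat.find hex, Nat.find_spec hex, fun _ h => Nat.find_min hex h⟩
        obtain ⟨hm', hkeep, hnew⟩ := hstepI n hn i₀ hspec hmin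
        obtain ⟨h2i₀, hi₀m, -, -⟩ := hspec
        intro i h1 h2
        rw [hm'] at h2
        rcases Nat.lt_or_ge i i₀ with hlt | hge
        · obtain ⟨w, hw, hwp⟩ := ih i h1 (by omega)
          refine ⟨w, ?_, ?_⟩
          · rw [hkeep (i+1) hlt, hkeep i (by omega), hw]
          · intro p hp
            rw [hkeep i (by omega)]
            exact hwp p hp
        · have hieq : i = i₀ := by omega
          subst hieq
          refine ⟨S (z (m n) n), ?_, ?_⟩
          · rw [hnew, hkeep i le_rfl]
          · intro p hp
            rw [hkeep i le_rfl]
            calc dist (S (z (m n) n)) p ≤ dist (z (m n) n) p := hS_nonexp _ p hp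
              _ ≤ dist (z i n) p := hmonoOf n ih p hp i (m n) h1 (by omega) le_rfl
      · obtain ⟨hm', hkeep, hnew⟩ := hstepII n hn (not_exists.mp hex)
        intro i h1 h2
        rw [hm'] at h2
        rcases Nat.lt_or_ge (i+1) (m n + 1) with hlt | hge
        · have hle : i + 1 ≤ m n := by omega
          obtain ⟨w, hw, hwp⟩ := ih i h1 hle
          refine ⟨w, ?_, ?_⟩
          · rw [hkeep (i+1) hle, hkeep i (by omega), hw]
          · intro p hp
            rw [hkeep i (by omega)]
            exact hwp p hp
        · have hieq : i = m n := by omega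
          subst hieq
          refine ⟨S (z (m n) n), ?_, ?_⟩
          · rw [hnew, hkeep (m n) le_rfl]
          · intro p hp
            rw [hkeep (m n) le_rfl]
            exact hS_nonexp _ p hp
  -- main argument
  intro q hq ε hε j hj i hi him hdist
  obtain ⟨w, hw, hwp⟩ := hQ j hj i hi him
  have hwq : dist w q ≤ dist (z i j) q := hwp q hq
  have hdw : dist (z i j) w = 2 * dist (z i j) (z (i+1) j) := by
    rw [hw, hhalf]
    ring
  set s := dist (z i j) q with hs
  have hsb : s ≤ b := hbd _ _
  have hsε : ε ≤ s := by
    have h1 : 2*ε ≤ dist (z i j) w := by rw [hdw]; linarith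
    have h2 : dist (z i j) w ≤ s + dist w q := dist_triangle_right _ _ _
    linarith
  have hspos : 0 < s := lt_of_lt_of_le hε hsε
  have hε₀ : 0 < ε / b := div_pos hε hb
  have hεb : ε / b * b = ε := div_mul_cancel₀ ε hb.ne'
  have harg : (ε/b) * s ≤ dist (z i j) w := by
    have h1 : (ε/b) * s ≤ (ε/b) * b := mul_le_mul_of_nonneg_left hsb hε₀.le
    rw [hdw]
    linarith
  have hmod := hη_mod s (ε/b) hspos hε₀ q (z i j) w le_rfl hwq harg
  rw [← hw] at hmod
  have hmono' : η b (ε/b) ≤ η s (ε/b) := hη_mono b s (ε/b) hspos hsb hε₀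
  have hηpos : 0 < η b (ε/b) := (hη_range b (ε/b) hb hε₀).1
  have hkey : dist (z (i+1) j) q ≤ s - η b (ε/b) * ε := by
    nlinarith [mul_le_mul_of_nonneg_right hmono' hspos.le,
      mul_le_mul_of_nonneg_left hsε hηpos.le]
  have hgoal : (ε/b/2 * η b (ε/b)) * b = ε/2 * η b (ε/b) := by
    field_simp
  rw [hgoal]
  nlinarith
end

section
/- In the Moloney-type iteration, the sequence (x_n) of 'stabilized' points satisfies lim_{n→∞} d(x_n, x_{n+1}) = 0. -/
open Filter Topology

theorem stmt10 {X : Type*} [MetricSpace X] [CompleteSpace X] [Nonempty X]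
    (W : X → X → ℝ → X)
    (W1 : ∀ x y z : X, ∀ t : ℝ, t ∈ Set.Icc (0:ℝ) 1 →
      dist z (W x y t) ≤ (1 - t) * dist z x + t * dist z y)
    (W2 : ∀ x y : X, ∀ t s : ℝ, t ∈ Set.Icc (0:ℝ) 1 → s ∈ Set.Icc (0:ℝ) 1 →
      dist (W x y t) (W x y s) = |t - s| * dist x y)
    (W3 : ∀ x y : X, ∀ t : ℝ, t ∈ Set.Icc (0:ℝ) 1 → W x y t = W y x (1 - t))
    (W4 : ∀ x y z w : X, ∀ t : ℝ, t ∈ Set.Icc (0:ℝ) 1 →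
      dist (W x z t) (W y w t) ≤ (1 - t) * dist x y + t * dist z w)
    (η : ℝ → ℝ → ℝ)
    (hη_range : ∀ r ε : ℝ, 0 < r → 0 < ε → η r ε ∈ Set.Ioc (0:ℝ) 1)
    (hη_mod : ∀ r ε : ℝ, 0 < r → 0 < ε → ∀ a x y : X,
      dist x a ≤ r → dist y a ≤ r → ε * r ≤ dist x y →
      dist (W x y (1/2)) a ≤ (1 - η r ε) * r)
    (hη_mono : ∀ r s ε : ℝ, 0 < s → s ≤ r → 0 < ε → η r ε ≤ η s ε)
    (b : ℝ) (hb : 0 < b) (hbd : ∀ x y : X, dist x y ≤ b)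
    (S : X → X) (x0 : X)
    (hfix_ne : ∃ p : X, S p = p)
    (hS_nonexp : ∀ (x p : X), S p = p → dist (S x) p ≤ dist x p)
    (z : ℕ → ℕ → X) (m : ℕ → ℕ)
    (hm1 : m 1 = 1) (hz11 : z 1 1 = x0)
    (hm_ge : ∀ j, 1 ≤ j → 1 ≤ m j)
    (hstepI : ∀ j, 1 ≤ j → ∀ i : ℕ, CaseI W S z m j i →
      (∀ i' < i, ¬ CaseI W S z m j i') →
      m (j+1) = i + 1 ∧ (∀ q ≤ i, z q (j+1) = z q j) ∧
        z (i+1) (j+1) = W (z i j) (S (z (m j) j)) (1/2))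
    (hstepII : ∀ j, 1 ≤ j → (∀ i : ℕ, ¬ CaseI W S z m j i) →
      m (j+1) = m j + 1 ∧ (∀ q ≤ m j, z q (j+1) = z q j) ∧
        z (m j + 1) (j+1) = W (z (m j) j) (S (z (m j) j)) (1/2))
    (p : ℕ → ℕ)
    (hp1 : p 1 = 1)
    (hp_mono : ∀ k, 1 ≤ k → p k < p (k+1))
    (hp_m : ∀ k, 1 ≤ k → m (p k) = k)
    (hp_stab : ∀ k, 1 ≤ k → ∀ j, p k ≤ j → z k j = z k (p k))
    (hp_grow : ∀ k, 1 ≤ k → ∀ j, p k + 1 ≤ j → k + 1 ≤ m j) :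
    Filter.Tendsto (fun n => dist (z n (p n)) (z (n+1) (p (n+1)))) Filter.atTop (nhds 0) := by

  classical
  obtain ⟨q, hq⟩ := hfix_ne
  have hb2 : (1:ℝ)/2 ∈ Set.Icc (0:ℝ) 1 := by norm_num
  -- p k ≥ 1 for k ≥ 1
  have hp_pos : ∀ k, 1 ≤ k → 1 ≤ p k := by
    intro k hk
    induction k with
    | zero => omega
    | succ k ih =>
      rcases Nat.eq_zero_or_pos k with h | h
      · subst h; simp [hp1]
      · have h1 := hp_mono k h
        have h2 := ih h
        omega
  -- unified description of the step j → j+1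
  have hstep : ∀ j, 1 ≤ j → ∃ i, 1 ≤ i ∧ m (j+1) = i + 1 ∧ i ≤ m j ∧
      (∀ q' ≤ i, z q' (j+1) = z q' j) ∧
      z (i+1) (j+1) = W (z i j) (S (z (m j) j)) (1/2) := by
    intro j hj
    by_cases h : ∃ i, CaseI W S z m j i
    · have hc := Nat.find_spec h
      obtain ⟨h1, h2, h3⟩ := hstepI j hj (Nat.find h) hc
        (fun i' hi' => Nat.find_min h hi')
      unfold CaseI at hc
      obtain ⟨hc1, hc2, -, -⟩ := hc
      exact ⟨Nat.find h, le_trans (by norm_num) hc1, h1, Nat.le_of_succ_le hc2, h2, h3⟩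
    · push_neg at h
      obtain ⟨h1, h2, h3⟩ := hstepII j hj h
      exact ⟨m j, hm_ge j hj, h1, le_rfl, h2, h3⟩
  -- row monotonicity of distances to the fixed point
  have hmono : ∀ j, 1 ≤ j → ∀ a c, 1 ≤ a → a ≤ c → c ≤ m j →
      dist (z c j) q ≤ dist (z a j) q := by
    intro j
    induction j with
    | zero => omega
    | succ j ih =>
      intro _ a c ha hac hc
      rcases Nat.eq_zero_or_pos j with hj0 | hj1
      · subst hj0
        have hm1' : m (0+1) = 1 := hm1
        have : a = c := by omega
        subst this; rfl
      · obtain ⟨i0, hi01, hm', hi0m, hcopy, hnew⟩ := hstep j hj1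
        have hkey : dist (z (i0+1) (j+1)) q ≤ dist (z i0 j) q := by
          rw [hnew]
          have h1 := W1 (z i0 j) (S (z (m j) j)) q (1/2) hb2
          have h2 : dist (S (z (m j) j)) q ≤ dist (z (m j) j) q :=
            hS_nonexp _ q hq
          have h3 : dist (z (m j) j) q ≤ dist (z i0 j) q :=
            ih hj1 i0 (m j) hi01 hi0m le_rfl
          have e1 := dist_comm q (z i0 j)
          have e2 := dist_comm q (S (z (m j) j))
          have e3 := dist_comm (W (z i0 j) (S (z (m j) j)) (1/2)) q
          linarith
        rcases Nat.lt_or_ge c (i0+1) with hcle | hcge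
        · rw [hcopy a (by omega), hcopy c (by omega)]
          exact ih hj1 a c ha hac (by omega)
        · have hc' : c = i0 + 1 := by omega
          subst hc'
          rcases Nat.lt_or_ge a (i0+1) with hale | hage
          · rw [hcopy a (by omega)]
            calc dist (z (i0+1) (j+1)) q ≤ dist (z i0 j) q := hkey
              _ ≤ dist (z a j) q := ih hj1 a i0 ha (by omega) (by omega)
          · have : a = i0+1 := by omega
            subst this; rfl
  -- key structural lemma for the stabilized sequence
  have hkey : ∀ k, 1 ≤ k → ∃ w : X,
      z (k+1) (p (k+1)) = W (z k (p k)) (S w) (1/2) ∧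
      dist (S w) q ≤ dist (z k (p k)) q := by
    intro k hk
    have hpk := hp_pos k hk
    have hmk := hp_mono k hk
    set j := p (k+1) - 1 with hjdef
    have hj1 : j + 1 = p (k+1) := by omega
    have hjpk : p k ≤ j := by omega
    have hjpos : 1 ≤ j := by omega
    obtain ⟨i0, hi01, hm', hi0m, hcopy, hnew⟩ := hstep j hjpos
    have hmp : m (p (k+1)) = k + 1 := hp_m (k+1) (by omega)
    have hi0k : i0 = k := by rw [hj1] at hm'; omega
    subst hi0k
    have hzkj : z i0 j = z i0 (p i0) := hp_stab i0 hk j hjpk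
    refine ⟨z (m j) j, ?_, ?_⟩
    · rw [← hj1, hnew, hzkj]
    · calc dist (S (z (m j) j)) q ≤ dist (z (m j) j) q := hS_nonexp _ q hq
        _ ≤ dist (z i0 j) q := hmono j hjpos i0 (m j) hi01 hi0m le_rfl
        _ = _ := by rw [hzkj]
  -- monotonicity of distances to q for the stabilized sequence
  have hmonoA : ∀ k, 1 ≤ k →
      dist (z (k+1) (p (k+1))) q ≤ dist (z k (p k)) q := by
    intro k hk
    obtain ⟨w, hw1, hw2⟩ := hkey k hk
    rw [hw1]
    have h1 := W1 (z k (p k)) (S w) q (1/2) hb2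
    have e1 := dist_comm q (z k (p k))
    have e2 := dist_comm q (S w)
    have e3 := dist_comm (W (z k (p k)) (S w) (1/2)) q
    linarith
  -- drop lemma
  have hdrop : ∀ ε : ℝ, 0 < ε → ∀ k, 1 ≤ k →
      ε ≤ dist (z k (p k)) (z (k+1) (p (k+1))) →
      dist (z (k+1) (p (k+1))) q ≤ dist (z k (p k)) q - η b (2*ε/b) * ε := by
    intro ε hε k hk hdist
    obtain ⟨w, hw1, hw2⟩ := hkey k hk
    set x := z k (p k) with hxdef
    have hε' : 0 < 2*ε/b := by positivity
    have hxw : 2*ε ≤ dist x (S w) := by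
      have h1 := W1 x (S w) x (1/2) hb2
      rw [hw1] at hdist
      simp only [dist_self] at h1
      linarith
    have hr0 : ε ≤ dist x q := by
      have t1 := dist_triangle x q (S w)
      have t2 := dist_comm q (S w)
      linarith
    have hrpos : 0 < dist x q := lt_of_lt_of_le hε hr0
    have h2 : 2*ε/b * dist x q ≤ dist x (S w) := by
      have h3 : 2*ε/b * dist x q ≤ 2*ε/b * b :=
        mul_le_mul_of_nonneg_left (hbd x q) (le_of_lt hε')
      have h4 : 2*ε/b * b = 2*ε := div_mul_cancel₀ _ (ne_of_gt hb)
      linarith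
    have hmod := hη_mod (dist x q) (2*ε/b) hrpos hε' q x (S w) le_rfl hw2 h2
    have hm2 : η b (2*ε/b) ≤ η (dist x q) (2*ε/b) :=
      hη_mono b (dist x q) (2*ε/b) hrpos (hbd x q) hε'
    have hm3 := hη_range b (2*ε/b) hb hε'
    rw [hw1]
    have hexp : (1 - η (dist x q) (2*ε/b)) * dist x q
        = dist x q - η (dist x q) (2*ε/b) * dist x q := by ring
    have hp1' : η b (2*ε/b) * dist x q ≤ η (dist x q) (2*ε/b) * dist x q :=
      mul_le_mul_of_nonneg_right hm2 hrpos.le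
    have hp2' : η b (2*ε/b) * ε ≤ η b (2*ε/b) * dist x q :=
      mul_le_mul_of_nonneg_left hr0 hm3.1.le
    linarith
  -- the auxiliary antitone sequence
  set A : ℕ → ℝ := fun n => dist (z (n+1) (p (n+1))) q with hAdef
  have hAanti : Antitone A :=
    antitone_nat_of_succ_le (fun n => hmonoA (n+1) (by omega))
  have hAbdd : BddBelow (Set.range A) := ⟨0, by rintro x ⟨n, rfl⟩; exact dist_nonneg⟩
  have hAtend : Tendsto A atTop (nhds (⨅ n, A n)) := tendsto_atTop_ciInf hAanti hAbdd
  have hdiff : Tendsto (fun n => A n - A (n+1)) atTop (nhds 0) := by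
    have h2 : Tendsto (fun n => A (n+1)) atTop (nhds (⨅ n, A n)) :=
      hAtend.comp (tendsto_add_atTop_nat 1)
    have h3 := hAtend.sub h2
    simpa using h3
  rw [Metric.tendsto_atTop]
  intro ε hε
  have hδpos : 0 < η b (2*ε/b) * ε :=
    mul_pos (hη_range b (2*ε/b) hb (by positivity)).1 hε
  obtain ⟨N, hN⟩ := Metric.tendsto_atTop.mp hdiff (η b (2*ε/b) * ε) hδpos
  refine ⟨N + 2, fun n hn => ?_⟩
  rw [Real.dist_eq, sub_zero, abs_of_nonneg dist_nonneg]
  by_contra hcon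
  push_neg at hcon
  have hd := hdrop ε hε n (by omega) hcon
  have hN' := hN (n-1) (by omega)
  rw [Real.dist_eq, sub_zero] at hN'
  have hsucc : n - 1 + 1 = n := by omega
  have hAn : A (n-1) = dist (z n (p n)) q := by
    simp only [hAdef, hsucc]
  have hAn1 : A (n-1+1) = dist (z (n+1) (p (n+1))) q := by
    simp only [hAdef, hsucc]
  rw [hAn, hAn1] at hN'
  have habs := abs_lt.mp hN'
  linarith [habs.1, habs.2]
end

section
/- In the Moloney-type iteration, if x_n = x_{n+1} = x_{n+2} for some n, then x_n is a fixed point of S and x_q = x_n for all q ≥ n. -/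
open Filter Topology

theorem stmt11 {X : Type*} [MetricSpace X] [CompleteSpace X] [Nonempty X]
    (W : X → X → ℝ → X)
    (W1 : ∀ x y z : X, ∀ t : ℝ, t ∈ Set.Icc (0:ℝ) 1 →
      dist z (W x y t) ≤ (1 - t) * dist z x + t * dist z y)
    (W2 : ∀ x y : X, ∀ t s : ℝ, t ∈ Set.Icc (0:ℝ) 1 → s ∈ Set.Icc (0:ℝ) 1 →
      dist (W x y t) (W x y s) = |t - s| * dist x y)
    (W3 : ∀ x y : X, ∀ t : ℝ, t ∈ Set.Icc (0:ℝ) 1 → W x y t = W y x (1 - t))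
    (W4 : ∀ x y z w : X, ∀ t : ℝ, t ∈ Set.Icc (0:ℝ) 1 →
      dist (W x z t) (W y w t) ≤ (1 - t) * dist x y + t * dist z w)
    (η : ℝ → ℝ → ℝ)
    (hη_range : ∀ r ε : ℝ, 0 < r → 0 < ε → η r ε ∈ Set.Ioc (0:ℝ) 1)
    (hη_mod : ∀ r ε : ℝ, 0 < r → 0 < ε → ∀ a x y : X,
      dist x a ≤ r → dist y a ≤ r → ε * r ≤ dist x y →
      dist (W x y (1/2)) a ≤ (1 - η r ε) * r)
    (hη_mono : ∀ r s ε : ℝ, 0 < s → s ≤ r → 0 < ε → η r ε ≤ η s ε)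
    (b : ℝ) (hb : 0 < b) (hbd : ∀ x y : X, dist x y ≤ b)
    (S : X → X) (x0 : X)
    (hfix_ne : ∃ p : X, S p = p)
    (hS_nonexp : ∀ (x p : X), S p = p → dist (S x) p ≤ dist x p)
    (z : ℕ → ℕ → X) (m : ℕ → ℕ)
    (hm1 : m 1 = 1) (hz11 : z 1 1 = x0)
    (hm_ge : ∀ j, 1 ≤ j → 1 ≤ m j)
    (hstepI : ∀ j, 1 ≤ j → ∀ i : ℕ, CaseI W S z m j i →
      (∀ i' < i, ¬ CaseI W S z m j i') →
      m (j+1) = i + 1 ∧ (∀ q ≤ i, z q (j+1) = z q j) ∧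
        z (i+1) (j+1) = W (z i j) (S (z (m j) j)) (1/2))
    (hstepII : ∀ j, 1 ≤ j → (∀ i : ℕ, ¬ CaseI W S z m j i) →
      m (j+1) = m j + 1 ∧ (∀ q ≤ m j, z q (j+1) = z q j) ∧
        z (m j + 1) (j+1) = W (z (m j) j) (S (z (m j) j)) (1/2))
    (p : ℕ → ℕ)
    (hp1 : p 1 = 1)
    (hp_mono : ∀ k, 1 ≤ k → p k < p (k+1))
    (hp_m : ∀ k, 1 ≤ k → m (p k) = k)
    (hp_stab : ∀ k, 1 ≤ k → ∀ j, p k ≤ j → z k j = z k (p k))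
    (hp_grow : ∀ k, 1 ≤ k → ∀ j, p k + 1 ≤ j → k + 1 ≤ m j) :
    ∀ n : ℕ, 1 ≤ n →
      z n (p n) = z (n+1) (p (n+1)) → z (n+1) (p (n+1)) = z (n+2) (p (n+2)) →
      S (z n (p n)) = z n (p n) ∧ ∀ q, n ≤ q → z q (p q) = z n (p n) := by
  -- basic W facts
  classical
  have hW0 : ∀ x y : X, W x y 0 = x := by
    intro x y
    have h : dist x (W x y 0) ≤ 0 :=
      le_trans (W1 x y x 0 ⟨le_refl 0, zero_le_one⟩) (by simp)
    exact (dist_eq_zero.mp (le_antisymm h dist_nonneg)).symm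
  have hWself : ∀ x : X, W x x (1/2) = x := by
    intro x
    have h : dist x (W x x (1/2)) ≤ 0 :=
      le_trans (W1 x x x (1/2) ⟨by norm_num, by norm_num⟩) (by simp)
    exact (dist_eq_zero.mp (le_antisymm h dist_nonneg)).symm
  have hWhalf : ∀ x y : X, W x y (1/2) = x → y = x := by
    intro x y h
    have h2 := W2 x y 0 (1/2) ⟨le_refl 0, zero_le_one⟩ ⟨by norm_num, by norm_num⟩
    rw [hW0, h, dist_self] at h2
    have habs : |(0:ℝ) - 1/2| = 1/2 := by norm_num
    rw [habs] at h2
    have hxy : dist x y = 0 := by linarith [dist_nonneg (x := x) (y := y)]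
    exact dist_eq_zero.mp (by rw [dist_comm]; exact hxy)
  -- trichotomy for each step
  have hstep : ∀ j, 1 ≤ j →
      (∃ i, CaseI W S z m j i ∧
        m (j+1) = i + 1 ∧ (∀ q ≤ i, z q (j+1) = z q j) ∧
        z (i+1) (j+1) = W (z i j) (S (z (m j) j)) (1/2)) ∨
      ((∀ i, ¬ CaseI W S z m j i) ∧ m (j+1) = m j + 1 ∧
        (∀ q ≤ m j, z q (j+1) = z q j) ∧
        z (m j + 1) (j+1) = W (z (m j) j) (S (z (m j) j)) (1/2)) := by
    intro j hj
    by_cases h : ∃ i, CaseI W S z m j i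
    · left
      have hspec := Nat.find_spec h
      have hmin : ∀ i' < Nat.find h, ¬ CaseI W S z m j i' := fun i' hi' => Nat.find_min h hi'
      obtain ⟨a, bb, cc⟩ := hstepI j hj _ hspec hmin
      exact ⟨_, hspec, a, bb, cc⟩
    · right
      push_neg at h
      exact ⟨h, hstepII j hj h⟩
  have hp_pos : ∀ k, 1 ≤ k → 1 ≤ p k := by
    intro k hk
    induction k with
    | zero => omega
    | succ k ih =>
      rcases Nat.eq_zero_or_pos k with h | h
      · subst h
        simpa using hp1.ge
      · have := hp_mono k h
        have := ih h
        omega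
  -- key lemma: x_k = x_{k+1} implies S-fixed and p(k+1) = p k + 1
  have L : ∀ k, 1 ≤ k → z k (p k) = z (k+1) (p (k+1)) →
      S (z k (p k)) = z k (p k) ∧ p (k+1) = p k + 1 := by
    intro k hk heq
    have hpk1 : p k < p (k+1) := hp_mono k hk
    have hpkpos : 1 ≤ p k := hp_pos k hk
    obtain ⟨j, hj⟩ : ∃ j, p (k+1) = j + 1 := ⟨p (k+1) - 1, by omega⟩
    have hjpk : p k ≤ j := by omega
    have hj1 : 1 ≤ j := by omega
    have hmj1 : m (j+1) = k + 1 := by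
      rw [← hj]; exact hp_m (k+1) (by omega)
    rcases hstep j hj1 with ⟨i, hci, hmi, hpres, hznew⟩ | ⟨hnone, hmII, hpres, hznew⟩
    · exfalso
      have hik : i = k := by omega
      rw [hik] at hci hznew
      have hzkj : z k j = z k (p k) := hp_stab k hk j hjpk
      have hx1 : z (k+1) (p (k+1)) = W (z k j) (S (z (m j) j)) (1/2) := by
        rw [hj]; exact hznew
      have hd0 : dist (z k j) (W (z k j) (S (z (m j) j)) (1/2)) = 0 := by
        rw [← hx1, ← heq, hzkj]
        simp
      obtain ⟨_, _, hlt, hle⟩ := hci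
      have h1 : dist (z k j) (z (k-1) j) ≤ 0 := hle.trans hd0.le
      have h2 : (0:ℝ) ≤ dist (z k j) (z (k+1) j) := dist_nonneg
      linarith
    · have hmj : m j = k := by omega
      have hjeq : j = p k := by
        by_contra hne
        have h1 : p k + 1 ≤ j := by omega
        have := hp_grow k hk j h1
        omega
      have hzkj : z (m j) j = z k (p k) := by rw [hmj, hjeq]
      have hx1 : z (k+1) (p (k+1)) = W (z k (p k)) (S (z k (p k))) (1/2) := by
        rw [hj, ← hzkj, ← hmj]
        exact hznew
      have hWx : W (z k (p k)) (S (z k (p k))) (1/2) = z k (p k) := by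
        rw [← hx1, ← heq]
      exact ⟨hWhalf _ _ hWx, by omega⟩
  intro n hn h01 h12
  obtain ⟨hSfix, _⟩ := L n hn h01
  set c := z n (p n) with hc
  -- propagation lemma
  have prop : ∀ k, n ≤ k → z k (p k) = c → z (k+1) (p (k+1)) = c →
      z (k+2) (p (k+2)) = c := by
    intro k hk hck hck1
    have hk1 : 1 ≤ k := le_trans hn hk
    obtain ⟨_, hpk1⟩ := L k hk1 (hck.trans hck1.symm)
    have hpkpos : 1 ≤ p k := hp_pos k hk1
    have hj'1 : 1 ≤ p (k+1) := hp_pos (k+1) (by omega)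
    have hmj' : m (p (k+1)) = k + 1 := hp_m (k+1) (by omega)
    have hSc : S c = c := hSfix
    have hbase : z (k+2) (p (k+1) + 1) = c := by
      rcases hstep (p (k+1)) hj'1 with ⟨i, hci, hmi, _, _⟩ | ⟨_, hmII, _, hznew⟩
      · exfalso
        have h1 : i + 1 ≤ m (p (k+1)) := hci.2.1
        have h2 := hp_grow (k+1) (by omega) (p (k+1) + 1) le_rfl
        omega
      · rw [hmj'] at hznew
        have hz1 : z (k+1) (p (k+1)) = c := hck1
        rw [show k + 2 = k + 1 + 1 from rfl, hznew, hz1, hSc]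
        exact hWself c
    have hprop : ∀ j, p (k+1) + 1 ≤ j → z (k+2) j = c := by
      intro j hjge
      induction j with
      | zero => omega
      | succ j ih =>
        rcases Nat.lt_or_ge j (p (k+1) + 1) with h | h
        · have : j + 1 = p (k+1) + 1 := by omega
          rw [this]; exact hbase
        · have hz : z (k+2) j = c := ih h
          have hj1 : 1 ≤ j := by omega
          have hmge : k + 2 ≤ m j := hp_grow (k+1) (by omega) j h
          rcases hstep j hj1 with ⟨i, hci, hmi, hpres, hznew⟩ | ⟨_, _, hpres, _⟩
          · have hi1 : k + 2 ≤ i + 1 := by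
              have := hp_grow (k+1) (by omega) (j+1) (by omega)
              omega
            rcases Nat.lt_or_ge (k+1) i with hgt | hle
            · rw [hpres (k+2) (by omega)]; exact hz
            · exfalso
              have hieq : i = k + 1 := by omega
              obtain ⟨_, _, hlt, _⟩ := hci
              rw [hieq] at hlt
              have e1 : z (k+1) j = c := by
                rw [hp_stab (k+1) (by omega) j (by omega)]; exact hck1
              have e2 : z (k+1-1) j = c := by
                have hkk : k + 1 - 1 = k := by omega
                rw [hkk, hp_stab k hk1 j (by omega)]; exact hck
              rw [e1, e2] at hlt
              have h3 : (0:ℝ) ≤ dist c (z (k+1+1) j) := dist_nonneg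
              simp at hlt
              linarith
          · rw [hpres (k+2) (by omega)]; exact hz
    refine hprop (p (k+2)) ?_
    have h := hp_mono (k+1) (by omega)
    rw [show k+1+1 = k+2 from rfl] at h
    omega
  have main : ∀ q, n ≤ q → z q (p q) = c ∧ z (q+1) (p (q+1)) = c := by
    intro q hq
    induction q with
    | zero => omega
    | succ q ih =>
      rcases Nat.lt_or_ge q n with h | h
      · have hqn : q + 1 = n := by omega
        subst hqn
        exact ⟨rfl, h01.symm⟩
      · obtain ⟨h1, h2⟩ := ih h
        exact ⟨h2, prop q h h1 h2⟩
  exact ⟨hSfix, fun q hq => (main q hq).1⟩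
end

section
/- In the Moloney-type iteration, if n ≥ 2 and d(x_n, x_{n+1}) < d(x_n, x_{n−1}), then for all q ≥ n, d(x_n, x_q) ≤ 2·d(x_n, x_{n−1}). -/
open Filter Topology

theorem stmt12 {X : Type*} [MetricSpace X] [CompleteSpace X] [Nonempty X]
    (W : X → X → ℝ → X)
    (W1 : ∀ x y z : X, ∀ t : ℝ, t ∈ Set.Icc (0:ℝ) 1 →
      dist z (W x y t) ≤ (1 - t) * dist z x + t * dist z y)
    (W2 : ∀ x y : X, ∀ t s : ℝ, t ∈ Set.Icc (0:ℝ) 1 → s ∈ Set.Icc (0:ℝ) 1 →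
      dist (W x y t) (W x y s) = |t - s| * dist x y)
    (W3 : ∀ x y : X, ∀ t : ℝ, t ∈ Set.Icc (0:ℝ) 1 → W x y t = W y x (1 - t))
    (W4 : ∀ x y z w : X, ∀ t : ℝ, t ∈ Set.Icc (0:ℝ) 1 →
      dist (W x z t) (W y w t) ≤ (1 - t) * dist x y + t * dist z w)
    (η : ℝ → ℝ → ℝ)
    (hη_range : ∀ r ε : ℝ, 0 < r → 0 < ε → η r ε ∈ Set.Ioc (0:ℝ) 1)
    (hη_mod : ∀ r ε : ℝ, 0 < r → 0 < ε → ∀ a x y : X,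
      dist x a ≤ r → dist y a ≤ r → ε * r ≤ dist x y →
      dist (W x y (1/2)) a ≤ (1 - η r ε) * r)
    (hη_mono : ∀ r s ε : ℝ, 0 < s → s ≤ r → 0 < ε → η r ε ≤ η s ε)
    (b : ℝ) (hb : 0 < b) (hbd : ∀ x y : X, dist x y ≤ b)
    (S : X → X) (x0 : X)
    (hfix_ne : ∃ p : X, S p = p)
    (hS_nonexp : ∀ (x p : X), S p = p → dist (S x) p ≤ dist x p)
    (z : ℕ → ℕ → X) (m : ℕ → ℕ)
    (hm1 : m 1 = 1) (hz11 : z 1 1 = x0)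
    (hm_ge : ∀ j, 1 ≤ j → 1 ≤ m j)
    (hstepI : ∀ j, 1 ≤ j → ∀ i : ℕ, CaseI W S z m j i →
      (∀ i' < i, ¬ CaseI W S z m j i') →
      m (j+1) = i + 1 ∧ (∀ q ≤ i, z q (j+1) = z q j) ∧
        z (i+1) (j+1) = W (z i j) (S (z (m j) j)) (1/2))
    (hstepII : ∀ j, 1 ≤ j → (∀ i : ℕ, ¬ CaseI W S z m j i) →
      m (j+1) = m j + 1 ∧ (∀ q ≤ m j, z q (j+1) = z q j) ∧
        z (m j + 1) (j+1) = W (z (m j) j) (S (z (m j) j)) (1/2))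
    (p : ℕ → ℕ)
    (hp1 : p 1 = 1)
    (hp_mono : ∀ k, 1 ≤ k → p k < p (k+1))
    (hp_m : ∀ k, 1 ≤ k → m (p k) = k)
    (hp_stab : ∀ k, 1 ≤ k → ∀ j, p k ≤ j → z k j = z k (p k))
    (hp_grow : ∀ k, 1 ≤ k → ∀ j, p k + 1 ≤ j → k + 1 ≤ m j) :
    ∀ n : ℕ, 2 ≤ n →
      dist (z n (p n)) (z (n+1) (p (n+1))) < dist (z n (p n)) (z (n-1) (p (n-1))) →
      ∀ q, n ≤ q →
        dist (z n (p n)) (z q (p q)) ≤ 2 * dist (z n (p n)) (z (n-1) (p (n-1))) := by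

  classical
  intro n hn hlt q hq
  have hr0 : 0 ≤ dist (z n (p n)) (z (n-1) (p (n-1))) := dist_nonneg
  -- W x y 0 = x
  have hW0 : ∀ x y : X, W x y 0 = x := by
    intro x y
    have h : dist x (W x y 0) ≤ 0 := by
      have := W1 x y x 0 ⟨le_rfl, zero_le_one⟩
      simpa using this
    exact (dist_le_zero.mp h).symm
  -- midpoint distance
  have hWmid : ∀ x y : X, dist x (W x y (1/2)) = (1/2) * dist x y := by
    intro x y
    have h := W2 x y 0 (1/2) (by norm_num) (by norm_num)
    rw [hW0] at h
    rw [h]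
    norm_num
  -- p monotonicity helpers
  have hp_ge1 : ∀ k, 1 ≤ k → 1 ≤ p k := by
    intro k hk
    induction k with
    | zero => omega
    | succ k ih =>
      rcases Nat.lt_or_ge 1 (k+1) with h1 | h1
      · have hk1 : 1 ≤ k := by omega
        have h2 := hp_mono k hk1
        have h3 := ih hk1
        omega
      · have : k + 1 = 1 := by omega
        rw [this, hp1]
  have hp_add : ∀ a, 1 ≤ a → ∀ e, p a ≤ p (a + e) := by
    intro a ha e
    induction e with
    | zero => simp
    | succ e ih =>
      have h2 := hp_mono (a + e) (by omega)
      have : a + (e+1) = (a + e) + 1 := by omega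
      rw [this]
      omega
  have hp_le : ∀ a c, 1 ≤ a → a ≤ c → p a ≤ p c := by
    intro a c ha hac
    obtain ⟨e, rfl⟩ : ∃ e, c = a + e := ⟨c - a, by omega⟩
    exact hp_add a ha e
  have hp_lt : ∀ a c, 1 ≤ a → a < c → p a < p c := by
    intro a c ha hac
    have h1 : p a ≤ p (c - 1) := hp_le a (c-1) ha (by omega)
    have h2 := hp_mono (c-1) (by omega)
    have : (c - 1) + 1 = c := by omega
    rw [this] at h2
    omega
  -- auxiliary fact: for u ≥ p (n+1), dist x_n (S y_u) ≤ 2 r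
  have aux : ∀ u, p (n+1) ≤ u →
      dist (z n (p n)) (S (z (m u) u)) ≤ 2 * dist (z n (p n)) (z (n-1) (p (n-1))) := by
    intro u hu
    by_contra hcon
    push_neg at hcon
    have hpn_lt : p n < p (n+1) := hp_mono n (by omega)
    have hpn_le_u : p n ≤ u := by omega
    have hpn1 : p (n-1) < p n := hp_lt (n-1) n (by omega) (by omega)
    have hzn : z n u = z n (p n) := hp_stab n (by omega) u hpn_le_u
    have hzn1 : z (n+1) u = z (n+1) (p (n+1)) := hp_stab (n+1) (by omega) u hu
    have hznm : z (n-1) u = z (n-1) (p (n-1)) := hp_stab (n-1) (by omega) u (by omega)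
    have hc : CaseI W S z m u n := by
      refine ⟨hn, hp_grow n (by omega) u (by omega), ?_, ?_⟩
      · rw [hzn, hzn1, hznm]; exact hlt
      · rw [hzn, hznm, hWmid]
        linarith
    have hex : ∃ i, CaseI W S z m u i := ⟨n, hc⟩
    have hu1 : 1 ≤ u := le_trans (hp_ge1 (n+1) (by omega)) hu
    obtain ⟨hm', -, -⟩ := hstepI u hu1 (Nat.find hex) (Nat.find_spec hex)
      (fun i' hi' => Nat.find_min hex hi')
    have hfind_le : Nat.find hex ≤ n := Nat.find_min' hex hc
    have hgrow : n + 2 ≤ m (u+1) := hp_grow (n+1) (by omega) (u+1) (by omega)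
    omega
  -- main induction on q
  induction q, hq using Nat.le_induction with
  | base => simp only [dist_self]; linarith
  | succ q hq ih =>
    rcases Nat.eq_or_lt_of_le hq with hqe | hqs
    · -- q = n
      rw [← hqe]
      linarith
    · -- n + 1 ≤ q
      have hq1 : 1 ≤ q := by omega
      have hpq1 : 1 ≤ p q := hp_ge1 q hq1
      have hlt' : p q < p (q+1) := hp_mono q hq1
      obtain ⟨u, hu⟩ : ∃ u, p (q+1) = u + 1 := ⟨p (q+1) - 1, by omega⟩
      have hu_ge : p q ≤ u := by omega
      have hu1 : 1 ≤ u := le_trans hpq1 hu_ge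
      have hupn1 : p (n+1) ≤ u :=
        le_trans (hp_le (n+1) q (by omega) (by omega)) hu_ge
      have hzq : z q u = z q (p q) := hp_stab q hq1 u hu_ge
      have hmq1 : m (p (q+1)) = q + 1 := hp_m (q+1) (by omega)
      rw [hu] at hmq1
      have haux := aux u hupn1
      by_cases hex : ∃ i, CaseI W S z m u i
      · obtain ⟨hm', -, hnew⟩ := hstepI u hu1 (Nat.find hex) (Nat.find_spec hex)
          (fun i' hi' => Nat.find_min hex hi')
        have hiq : Nat.find hex = q := by omega
        rw [hiq] at hnew
        rw [hu, hnew, hzq]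
        have hb1 := W1 (z q u) (S (z (m u) u)) (z n (p n)) (1/2) (by norm_num)
        rw [hzq] at hb1
        linarith
      · have hstep := hstepII u hu1 (fun i hi => hex ⟨i, hi⟩)
        obtain ⟨hm', -, hnew⟩ := hstep
        have hmu : m u = q := by omega
        rw [hmu] at hnew
        rw [hmu, hzq] at haux
        rw [hu, hnew, hzq]
        have hb1 := W1 (z q u) (S (z q u)) (z n (p n)) (1/2) (by norm_num)
        rw [hzq] at hb1
        linarith
end

section
/- In the Moloney-type iteration, the sequence (x_n) is Cauchy, hence (since X is complete) convergent. -/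
open Filter Topology

theorem stmt13 {X : Type*} [MetricSpace X] [CompleteSpace X] [Nonempty X]
    (W : X → X → ℝ → X)
    (W1 : ∀ x y z : X, ∀ t : ℝ, t ∈ Set.Icc (0:ℝ) 1 →
      dist z (W x y t) ≤ (1 - t) * dist z x + t * dist z y)
    (W2 : ∀ x y : X, ∀ t s : ℝ, t ∈ Set.Icc (0:ℝ) 1 → s ∈ Set.Icc (0:ℝ) 1 →
      dist (W x y t) (W x y s) = |t - s| * dist x y)
    (W3 : ∀ x y : X, ∀ t : ℝ, t ∈ Set.Icc (0:ℝ) 1 → W x y t = W y x (1 - t))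
    (W4 : ∀ x y z w : X, ∀ t : ℝ, t ∈ Set.Icc (0:ℝ) 1 →
      dist (W x z t) (W y w t) ≤ (1 - t) * dist x y + t * dist z w)
    (η : ℝ → ℝ → ℝ)
    (hη_range : ∀ r ε : ℝ, 0 < r → 0 < ε → η r ε ∈ Set.Ioc (0:ℝ) 1)
    (hη_mod : ∀ r ε : ℝ, 0 < r → 0 < ε → ∀ a x y : X,
      dist x a ≤ r → dist y a ≤ r → ε * r ≤ dist x y →
      dist (W x y (1/2)) a ≤ (1 - η r ε) * r)
    (hη_mono : ∀ r s ε : ℝ, 0 < s → s ≤ r → 0 < ε → η r ε ≤ η s ε)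
    (b : ℝ) (hb : 0 < b) (hbd : ∀ x y : X, dist x y ≤ b)
    (S : X → X) (x0 : X)
    (hfix_ne : ∃ p : X, S p = p)
    (hS_nonexp : ∀ (x p : X), S p = p → dist (S x) p ≤ dist x p)
    (z : ℕ → ℕ → X) (m : ℕ → ℕ)
    (hm1 : m 1 = 1) (hz11 : z 1 1 = x0)
    (hm_ge : ∀ j, 1 ≤ j → 1 ≤ m j)
    (hstepI : ∀ j, 1 ≤ j → ∀ i : ℕ, CaseI W S z m j i →
      (∀ i' < i, ¬ CaseI W S z m j i') →
      m (j+1) = i + 1 ∧ (∀ q ≤ i, z q (j+1) = z q j) ∧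
        z (i+1) (j+1) = W (z i j) (S (z (m j) j)) (1/2))
    (hstepII : ∀ j, 1 ≤ j → (∀ i : ℕ, ¬ CaseI W S z m j i) →
      m (j+1) = m j + 1 ∧ (∀ q ≤ m j, z q (j+1) = z q j) ∧
        z (m j + 1) (j+1) = W (z (m j) j) (S (z (m j) j)) (1/2))
    (p : ℕ → ℕ)
    (hp1 : p 1 = 1)
    (hp_mono : ∀ k, 1 ≤ k → p k < p (k+1))
    (hp_m : ∀ k, 1 ≤ k → m (p k) = k)
    (hp_stab : ∀ k, 1 ≤ k → ∀ j, p k ≤ j → z k j = z k (p k))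
    (hp_grow : ∀ k, 1 ≤ k → ∀ j, p k + 1 ≤ j → k + 1 ≤ m j) :
    CauchySeq (fun n => z n (p n)) ∧
      ∃ l : X, Filter.Tendsto (fun n => z n (p n)) Filter.atTop (nhds l) := by
  classical
  obtain ⟨pf, hpf⟩ := hfix_ne
  have hmem : (1/2:ℝ) ∈ Set.Icc (0:ℝ) 1 := by constructor <;> norm_num
  have hmem0 : (0:ℝ) ∈ Set.Icc (0:ℝ) 1 := by constructor <;> norm_num
  -- W x y 0 = x
  have hW0 : ∀ a c : X, W a c 0 = a := by
    intro a c
    have h := W1 a c a 0 hmem0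
    simp at h
    exact h.symm
  -- dist a (W a c 1/2) = (1/2) * dist a c
  have hWhalf : ∀ a c : X, dist a (W a c (1/2)) = (1/2) * dist a c := by
    intro a c
    have h := W2 a c (1/2) 0 hmem hmem0
    rw [hW0] at h
    rw [dist_comm a (W a c (1/2)), h]
    norm_num
  -- basic facts about p
  have hp_ge1 : ∀ k, 1 ≤ k → 1 ≤ p k := by
    intro k hk
    induction k, hk using Nat.le_induction with
    | base => omega
    | succ n hn ih => have := hp_mono n hn; omega
  have hp_le : ∀ k, 1 ≤ k → ∀ l, k ≤ l → p k ≤ p l := by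
    intro k hk l hl
    induction l, hl using Nat.le_induction with
    | base => exact le_rfl
    | succ n hn ih => exact le_trans ih (le_of_lt (hp_mono n (le_trans hk hn)))
  -- unified step lemma
  have hstep : ∀ j, 1 ≤ j → ∃ i₁, m (j+1) = i₁ + 1 ∧ i₁ ≤ m j ∧
      (∀ q ≤ i₁, z q (j+1) = z q j) ∧
      z (i₁+1) (j+1) = W (z i₁ j) (S (z (m j) j)) (1/2) ∧
      (∀ i' < i₁, ¬ CaseI W S z m j i') := by
    intro j hj
    by_cases hC : ∃ i, CaseI W S z m j i
    · obtain ⟨hm', hzeq, hlast⟩ := hstepI j hj (Nat.find hC) (Nat.find_spec hC)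
        (fun i' hi' => Nat.find_min hC hi')
      exact ⟨Nat.find hC, hm', by have := (Nat.find_spec hC).2.1; omega, hzeq, hlast,
        fun i' hi' => Nat.find_min hC hi'⟩
    · push_neg at hC
      obtain ⟨hm', hzeq, hlast⟩ := hstepII j hj hC
      exact ⟨m j, hm', le_rfl, hzeq, hlast, fun i' _ => hC i'⟩
  -- the step producing x (k+1) from x k
  have hxstep : ∀ k, 1 ≤ k → ∃ j, 1 ≤ j ∧ p k ≤ j ∧ j + 1 = p (k+1) ∧ k ≤ m j ∧
      z (k+1) (p (k+1)) = W (z k (p k)) (S (z (m j) j)) (1/2) ∧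
      (∀ i' < k, ¬ CaseI W S z m j i') := by
    intro k hk
    have h1 : p k < p (k+1) := hp_mono k hk
    have h2 : 1 ≤ p k := hp_ge1 k hk
    have hj1 : (p (k+1) - 1) + 1 = p (k+1) := by omega
    have hjpk : p k ≤ p (k+1) - 1 := by omega
    have hj : 1 ≤ p (k+1) - 1 := le_trans h2 hjpk
    obtain ⟨i₁, hm', hle, hzeq, hlast, hnot⟩ := hstep (p (k+1) - 1) hj
    rw [hj1] at hm'
    have hmk : m (p (k+1)) = k + 1 := hp_m (k+1) (by omega)
    have hi₁ : k = i₁ := by omega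
    subst hi₁
    refine ⟨p (k+1) - 1, hj, hjpk, hj1, hle, ?_, hnot⟩
    rw [hj1] at hlast
    rw [hlast, hp_stab k hk _ hjpk]
  -- monotonicity of dist to pf along a row
  have hrow : ∀ j, 1 ≤ j → ∀ i, 1 ≤ i → i + 1 ≤ m j →
      dist (z (i+1) j) pf ≤ dist (z i j) pf := by
    intro j
    induction j with
    | zero => intro h; omega
    | succ j ih =>
      intro _ i hi hi1
      rcases Nat.eq_zero_or_pos j with hj0 | hj
      · subst hj0
        rw [show (0:ℕ)+1 = 1 from rfl, hm1] at hi1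
        omega
      · have chain : ∀ i₀, 1 ≤ i₀ → ∀ d, i₀ + d ≤ m j →
            dist (z (i₀ + d) j) pf ≤ dist (z i₀ j) pf := by
          intro i₀ hi₀ d
          induction d with
          | zero => intro _; simp
          | succ d ihd =>
            intro hle
            have h1 := ihd (by omega)
            have h2 := ih hj (i₀ + d) (by omega) (by omega)
            have he : i₀ + (d+1) = (i₀ + d) + 1 := by omega
            rw [he]
            exact le_trans h2 h1
        obtain ⟨i₁, hm', hle, hzeq, hlast, _⟩ := hstep j hj
        have hi1' : i + 1 ≤ i₁ + 1 := by omega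
        rcases lt_or_eq_of_le hi1' with hlt | heq
        · rw [hzeq (i+1) (by omega), hzeq i (by omega)]
          exact ih hj i hi (by omega)
        · have hii : i = i₁ := by omega
          subst hii
          rw [hlast, hzeq i le_rfl]
          have hc := chain i hi (m j - i) (by omega)
          rw [show i + (m j - i) = m j by omega] at hc
          have hSu : dist (S (z (m j) j)) pf ≤ dist (z i j) pf :=
            le_trans (hS_nonexp _ pf hpf) hc
          have hW := W1 (z i j) (S (z (m j) j)) pf (1/2) hmem
          have d1 : dist pf (z i j) = dist (z i j) pf := dist_comm _ _
          have d2 : dist pf (S (z (m j) j)) = dist (S (z (m j) j)) pf := dist_comm _ _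
          have d3 : dist (W (z i j) (S (z (m j) j)) (1/2)) pf
              = dist pf (W (z i j) (S (z (m j) j)) (1/2)) := dist_comm _ _
          linarith
  -- chain version
  have hchain : ∀ j, 1 ≤ j → ∀ i, 1 ≤ i → ∀ d, i + d ≤ m j →
      dist (z (i+d) j) pf ≤ dist (z i j) pf := by
    intro j hj i hi d
    induction d with
    | zero => intro _; simp
    | succ d ihd =>
      intro h
      have h1 := ihd (by omega)
      have h2 := hrow j hj (i+d) (by omega) (by omega)
      rw [show i + (d+1) = (i+d)+1 by omega]
      exact le_trans h2 h1
  set x : ℕ → X := fun n => z n (p n) with hxdef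
  -- the essential step fact for the stabilized sequence
  have hxfact : ∀ k, 1 ≤ k → ∃ u : X,
      z (k+1) (p (k+1)) = W (z k (p k)) (S u) (1/2) ∧
      dist (S u) pf ≤ dist (z k (p k)) pf := by
    intro k hk
    obtain ⟨j, hj, hjpk, hj1, hkm, hxk, _⟩ := hxstep k hk
    refine ⟨z (m j) j, hxk, ?_⟩
    have hc := hchain j hj k hk (m j - k) (by omega)
    rw [show k + (m j - k) = m j by omega] at hc
    rw [hp_stab k hk j hjpk] at hc
    exact le_trans (hS_nonexp _ pf hpf) hc
  have hr_mono : ∀ k, 1 ≤ k → dist (x (k+1)) pf ≤ dist (x k) pf := by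
    intro k hk
    obtain ⟨u, hxk, hu⟩ := hxfact k hk
    have hW := W1 (z k (p k)) (S u) pf (1/2) hmem
    show dist (z (k+1) (p (k+1))) pf ≤ dist (z k (p k)) pf
    rw [hxk, dist_comm]
    have d1 : dist pf (z k (p k)) = dist (z k (p k)) pf := dist_comm _ _
    have d2 : dist pf (S u) = dist (S u) pf := dist_comm _ _
    linarith
  have hr_anti : ∀ k, 1 ≤ k → ∀ l, k ≤ l → dist (x l) pf ≤ dist (x k) pf := by
    intro k hk l hl
    induction l, hl using Nat.le_induction with
    | base => exact le_rfl
    | succ n hn ih => exact le_trans (hr_mono n (le_trans hk hn)) ih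
  -- dist (x k) (x (k+1)) → 0
  have hd0 : ∀ ε : ℝ, 0 < ε → ∃ K, 1 ≤ K ∧ ∀ k, K ≤ k → dist (x k) (x (k+1)) < ε := by
    intro ε hε
    by_contra hcon
    push_neg at hcon
    have hbad : ∀ K, 1 ≤ K → ∃ k, K ≤ k ∧ ε ≤ dist (x k) (x (k+1)) := hcon
    have hrlb : ∀ k, 1 ≤ k → ε ≤ dist (x k) pf := by
      intro k hk
      obtain ⟨k', hk', hdk'⟩ := hbad k hk
      have h1 : ε ≤ dist (x k') pf := by
        obtain ⟨u, hxk, hu⟩ := hxfact k' (le_trans hk hk')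
        have hWd : dist (x k') (x (k'+1)) = (1/2) * dist (x k') (S u) := by
          show dist (z k' (p k')) (z (k'+1) (p (k'+1))) = _
          rw [hxk]
          exact hWhalf _ _
        have htr := dist_triangle (x k') pf (S u)
        have d2 : dist pf (S u) = dist (S u) pf := dist_comm _ _
        have hu' : dist (S u) pf ≤ dist (x k') pf := hu
        linarith
      exact le_trans h1 (hr_anti k hk k' hk')
    have hr1pos : 0 < dist (x 1) pf := lt_of_lt_of_le hε (hrlb 1 le_rfl)
    have hε'pos : 0 < ε / dist (x 1) pf := div_pos hε hr1pos
    have hcpos : 0 < η (dist (x 1) pf) (ε / dist (x 1) pf) :=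
      (hη_range _ _ hr1pos hε'pos).1
    have hcle : η (dist (x 1) pf) (ε / dist (x 1) pf) ≤ 1 :=
      (hη_range _ _ hr1pos hε'pos).2
    set c := η (dist (x 1) pf) (ε / dist (x 1) pf) with hcdef
    have hdrop : ∀ k, 1 ≤ k → ε ≤ dist (x k) (x (k+1)) →
        dist (x (k+1)) pf ≤ (1 - c) * dist (x k) pf := by
      intro k hk hdk
      obtain ⟨u, hxk, hu⟩ := hxfact k hk
      have hrk : ε ≤ dist (x k) pf := hrlb k hk
      have hrkpos : 0 < dist (x k) pf := lt_of_lt_of_le hε hrk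
      have hWd : dist (x k) (x (k+1)) = (1/2) * dist (x k) (S u) := by
        show dist (z k (p k)) (z (k+1) (p (k+1))) = _
        rw [hxk]
        exact hWhalf _ _
      have hrle : dist (x k) pf ≤ dist (x 1) pf := hr_anti 1 le_rfl k hk
      have hdist : (ε / dist (x 1) pf) * dist (x k) pf ≤ dist (x k) (S u) := by
        have h1 : (ε / dist (x 1) pf) * dist (x k) pf ≤ (ε / dist (x 1) pf) * dist (x 1) pf :=
          mul_le_mul_of_nonneg_left hrle (le_of_lt hε'pos)
        have h2 : (ε / dist (x 1) pf) * dist (x 1) pf = ε :=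
          div_mul_cancel₀ ε (ne_of_gt hr1pos)
        linarith
      have happ := hη_mod (dist (x k) pf) (ε / dist (x 1) pf) hrkpos hε'pos pf
        (x k) (S u) le_rfl hu hdist
      have hmono := hη_mono (dist (x 1) pf) (dist (x k) pf) (ε / dist (x 1) pf)
        hrkpos hrle hε'pos
      have hxeq : dist (x (k+1)) pf = dist (W (x k) (S u) (1/2)) pf := by
        show dist (z (k+1) (p (k+1))) pf = dist (W (z k (p k)) (S u) (1/2)) pf
        rw [hxk]
      rw [hxeq]
      have hnn : (0:ℝ) ≤ dist (x k) pf := dist_nonneg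
      nlinarith
    have hiter : ∀ n : ℕ, ∃ k, 1 ≤ k ∧ dist (x k) pf ≤ (1 - c)^n * dist (x 1) pf := by
      intro n
      induction n with
      | zero => exact ⟨1, le_rfl, by simp⟩
      | succ n ihn =>
        obtain ⟨k, hk, hkle⟩ := ihn
        obtain ⟨k', hk', hdk'⟩ := hbad k hk
        have h1 := hdrop k' (le_trans hk hk') hdk'
        refine ⟨k' + 1, by omega, ?_⟩
        have h2 : dist (x k') pf ≤ dist (x k) pf := hr_anti k hk k' hk'
        have h1c : (0:ℝ) ≤ 1 - c := by linarith
        calc dist (x (k'+1)) pf ≤ (1-c) * dist (x k') pf := h1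
          _ ≤ (1-c) * ((1-c)^n * dist (x 1) pf) :=
              mul_le_mul_of_nonneg_left (le_trans h2 hkle) h1c
          _ = (1-c)^(n+1) * dist (x 1) pf := by ring
    have hpow : Tendsto (fun n : ℕ => (1-c)^n * dist (x 1) pf) atTop (𝓝 0) := by
      have h := tendsto_pow_atTop_nhds_zero_of_lt_one (by linarith : (0:ℝ) ≤ 1 - c)
        (by linarith : 1 - c < 1)
      simpa using h.mul_const (dist (x 1) pf)
    obtain ⟨n, hn⟩ := (hpow.eventually_lt_const hε).exists
    obtain ⟨k, hk, hkle⟩ := hiter n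
    exact absurd (le_trans (hrlb k hk) hkle) (not_le.mpr hn)
  -- claim (c): after a strict decrease, all later terms stay close
  have hC6 : ∀ n, 1 ≤ n →
      dist (x (n+1)) (x (n+2)) < dist (x (n+1)) (x n) →
      ∀ q, n+1 ≤ q → dist (x (n+1)) (x q) ≤ 2 * dist (x (n+1)) (x n) := by
    intro n hn hdec q hq
    induction q, hq using Nat.le_induction with
    | base =>
      have : dist (x (n+1)) (x (n+1)) = 0 := dist_self _
      have h0 : (0:ℝ) ≤ dist (x (n+1)) (x n) := dist_nonneg
      linarith
    | succ q hq ih =>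
      by_cases hqn : q = n+1
      · subst hqn
        have h0 : (0:ℝ) ≤ dist (x (n+1)) (x n) := dist_nonneg
        linarith
      · have hq2 : n+2 ≤ q := by omega
        obtain ⟨j, hj, hjpq, hj1, hqm, hxq, hnotI⟩ := hxstep q (by omega)
        have hnot := hnotI (n+1) (by omega)
        have hpn1j : p (n+1) ≤ j := le_trans (hp_le (n+1) (by omega) q (by omega)) hjpq
        have hpnj : p n ≤ j := le_trans (hp_le n hn q (by omega)) hjpq
        have hpn2j : p (n+2) ≤ j := le_trans (hp_le (n+2) (by omega) q hq2) hjpq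
        have hzn1 : z (n+1) j = x (n+1) := hp_stab (n+1) (by omega) j hpn1j
        have hzn : z n j = x n := hp_stab n hn j hpnj
        have hzn2 : z (n+2) j = x (n+2) := hp_stab (n+2) (by omega) j hpn2j
        have hfail : ¬ (dist (z (n+1) j) (z n j) ≤
            dist (z (n+1) j) (W (z (n+1) j) (S (z (m j) j)) (1/2))) := by
          intro hle4
          apply hnot
          refine ⟨by omega, by omega, ?_, ?_⟩
          · show dist (z (n+1) j) (z (n+1+1) j) < dist (z (n+1) j) (z (n+1-1) j)
            have e1 : n+1+1 = n+2 := rfl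
            have e2 : n+1-1 = n := rfl
            rw [e1, e2, hzn1, hzn2, hzn]
            exact hdec
          · show dist (z (n+1) j) (z (n+1-1) j) ≤ _
            have e2 : n+1-1 = n := rfl
            rw [e2]
            exact hle4
        rw [hzn1, hzn] at hfail
        have h4 : dist (x (n+1)) (W (x (n+1)) (S (z (m j) j)) (1/2))
            < dist (x (n+1)) (x n) := not_le.mp hfail
        have hWh := hWhalf (x (n+1)) (S (z (m j) j))
        have hW1 := W1 (z q (p q)) (S (z (m j) j)) (x (n+1)) (1/2) hmem
        have hxq' : dist (x (n+1)) (x (q+1))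
            = dist (x (n+1)) (W (z q (p q)) (S (z (m j) j)) (1/2)) := by
          show dist (x (n+1)) (z (q+1) (p (q+1))) = _
          rw [hxq]
        have hxqx : dist (x (n+1)) (z q (p q)) = dist (x (n+1)) (x q) := rfl
        have htri := dist_triangle (x (n+1)) (x (n+1)) (S (z (m j) j))
        rw [hxq']
        have hSd : dist (x (n+1)) (S (z (m j) j))
            = 2 * dist (x (n+1)) (W (x (n+1)) (S (z (m j) j)) (1/2)) := by
          rw [hWh]; ring
        rw [hxqx] at hW1
        linarith
  -- final assembly
  have key : CauchySeq x := by
    rw [Metric.cauchySeq_iff]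
    intro ε hε
    by_cases hdec : ∀ N, ∃ n, N ≤ n ∧ 1 ≤ n ∧
        dist (x (n+1)) (x (n+2)) < dist (x (n+1)) (x n)
    · obtain ⟨K, hK1, hK⟩ := hd0 (ε/5) (by linarith)
      obtain ⟨n, hnK, hn1, hndec⟩ := hdec K
      have hall := hC6 n hn1 hndec
      refine ⟨n+2, fun a ha b hb => ?_⟩
      have h1 : dist (x (n+1)) (x a) ≤ 2 * dist (x (n+1)) (x n) := hall a (by omega)
      have h2 : dist (x (n+1)) (x b) ≤ 2 * dist (x (n+1)) (x n) := hall b (by omega)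
      have h3 : dist (x (n+1)) (x n) < ε/5 := by
        have h := hK n hnK
        rw [dist_comm (x (n+1)) (x n)]
        exact h
      have htri : dist (x a) (x b) ≤ dist (x (n+1)) (x a) + dist (x (n+1)) (x b) :=
        dist_triangle_left _ _ _
      linarith
    · push_neg at hdec
      obtain ⟨N, hN⟩ := hdec
      have hmono2 : ∀ a, max N 1 ≤ a → ∀ l, a ≤ l →
          dist (x a) (x (a+1)) ≤ dist (x l) (x (l+1)) := by
        intro a ha l hl
        induction l, hl using Nat.le_induction with
        | base => exact le_rfl
        | succ l hal ih =>
          have hNl : N ≤ l := le_trans (le_trans (le_max_left _ _) ha) hal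
          have h1l : 1 ≤ l := le_trans (le_trans (le_max_right _ _) ha) hal
          have h := hN l hNl h1l
          rw [dist_comm (x (l+1)) (x l)] at h
          exact le_trans ih h
      have hzero : ∀ l, max N 1 ≤ l → dist (x l) (x (l+1)) = 0 := by
        intro l hl
        by_contra hne
        have hpos : 0 < dist (x l) (x (l+1)) :=
          lt_of_le_of_ne dist_nonneg (Ne.symm hne)
        obtain ⟨K, hK1, hK⟩ := hd0 _ hpos
        have h1 := hK (max l K) (le_max_right _ _)
        have h2 := hmono2 l hl (max l K) (le_max_left _ _)
        linarith
      have hconst : ∀ l, max N 1 ≤ l → x l = x (max N 1) := by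
        intro l hl
        induction l, hl using Nat.le_induction with
        | base => rfl
        | succ l hMl ih =>
          have h0 := hzero l hMl
          have heq : x l = x (l+1) := eq_of_dist_eq_zero h0
          rw [← heq]
          exact ih
      refine ⟨max N 1, fun a ha b hb => ?_⟩
      rw [hconst a ha, hconst b hb, dist_self]
      exact hε
  exact ⟨key, cauchySeq_tendsto_of_complete key⟩
end

section
/- In the Moloney-type iteration, for every p ∈ Fix(S) and k ∈ ℕ, for all n ≥ p_k one has d(y_n, p) ≤ d(x_k, p). Consequently, since x_k → p* for some p* ∈ Fix(S), the full sequence (y_n) converges to p*. -/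
open Filter Topology

theorem stmt15 {X : Type*} [MetricSpace X] [CompleteSpace X] [Nonempty X]
    (W : X → X → ℝ → X)
    (W1 : ∀ x y z : X, ∀ t : ℝ, t ∈ Set.Icc (0:ℝ) 1 →
      dist z (W x y t) ≤ (1 - t) * dist z x + t * dist z y)
    (W2 : ∀ x y : X, ∀ t s : ℝ, t ∈ Set.Icc (0:ℝ) 1 → s ∈ Set.Icc (0:ℝ) 1 →
      dist (W x y t) (W x y s) = |t - s| * dist x y)
    (W3 : ∀ x y : X, ∀ t : ℝ, t ∈ Set.Icc (0:ℝ) 1 → W x y t = W y x (1 - t))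
    (W4 : ∀ x y z w : X, ∀ t : ℝ, t ∈ Set.Icc (0:ℝ) 1 →
      dist (W x z t) (W y w t) ≤ (1 - t) * dist x y + t * dist z w)
    (η : ℝ → ℝ → ℝ)
    (hη_range : ∀ r ε : ℝ, 0 < r → 0 < ε → η r ε ∈ Set.Ioc (0:ℝ) 1)
    (hη_mod : ∀ r ε : ℝ, 0 < r → 0 < ε → ∀ a x y : X,
      dist x a ≤ r → dist y a ≤ r → ε * r ≤ dist x y →
      dist (W x y (1/2)) a ≤ (1 - η r ε) * r)
    (hη_mono : ∀ r s ε : ℝ, 0 < s → s ≤ r → 0 < ε → η r ε ≤ η s ε)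
    (b : ℝ) (hb : 0 < b) (hbd : ∀ x y : X, dist x y ≤ b)
    (S : X → X) (x0 : X)
    (hfix_ne : ∃ p : X, S p = p)
    (hS_nonexp : ∀ (x p : X), S p = p → dist (S x) p ≤ dist x p)
    (z : ℕ → ℕ → X) (m : ℕ → ℕ)
    (hm1 : m 1 = 1) (hz11 : z 1 1 = x0)
    (hm_ge : ∀ j, 1 ≤ j → 1 ≤ m j)
    (hstepI : ∀ j, 1 ≤ j → ∀ i : ℕ, CaseI W S z m j i →
      (∀ i' < i, ¬ CaseI W S z m j i') →
      m (j+1) = i + 1 ∧ (∀ q ≤ i, z q (j+1) = z q j) ∧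
        z (i+1) (j+1) = W (z i j) (S (z (m j) j)) (1/2))
    (hstepII : ∀ j, 1 ≤ j → (∀ i : ℕ, ¬ CaseI W S z m j i) →
      m (j+1) = m j + 1 ∧ (∀ q ≤ m j, z q (j+1) = z q j) ∧
        z (m j + 1) (j+1) = W (z (m j) j) (S (z (m j) j)) (1/2))
    (p : ℕ → ℕ)
    (hp1 : p 1 = 1)
    (hp_mono : ∀ k, 1 ≤ k → p k < p (k+1))
    (hp_m : ∀ k, 1 ≤ k → m (p k) = k)
    (hp_stab : ∀ k, 1 ≤ k → ∀ j, p k ≤ j → z k j = z k (p k))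
    (hp_grow : ∀ k, 1 ≤ k → ∀ j, p k + 1 ≤ j → k + 1 ≤ m j) :
    (∀ q : X, S q = q → ∀ k : ℕ, 1 ≤ k → ∀ n, p k ≤ n →
      dist (z (m n) n) q ≤ dist (z k (p k)) q) ∧
      ∀ pstar : X, S pstar = pstar →
        Filter.Tendsto (fun k => z k (p k)) Filter.atTop (nhds pstar) →
        Filter.Tendsto (fun n => z (m n) n) Filter.atTop (nhds pstar) := by
  classical
  have half : (1/2 : ℝ) ∈ Set.Icc (0:ℝ) 1 := by norm_num
  -- within-row monotonicity of distances to fixed points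
  have key : ∀ q : X, S q = q → ∀ j, 1 ≤ j → ∀ i, 1 ≤ i → i + 1 ≤ m j →
      dist (z (i+1) j) q ≤ dist (z i j) q := by
    intro q hq j
    induction j with
    | zero => intro h; omega
    | succ j ih =>
      intro _ i hi him
      rcases Nat.eq_zero_or_pos j with hj0 | hj1
      · subst hj0; rw [hm1] at him; omega
      have chain : ∀ a c : ℕ, 1 ≤ a → a ≤ c → c ≤ m j →
          dist (z c j) q ≤ dist (z a j) q := by
        intro a c ha hac hcm
        induction c with
        | zero => omega
        | succ c ihc =>
          rcases Nat.lt_or_ge a (c+1) with h | h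
          · calc dist (z (c+1) j) q ≤ dist (z c j) q := ih hj1 c (by omega) (by omega)
              _ ≤ dist (z a j) q := ihc (by omega) (by omega)
          · have : a = c + 1 := by omega
            rw [this]
      by_cases hc : ∃ i', CaseI W S z m j i'
      · obtain ⟨hmj1, hcopy, hnew⟩ := hstepI j hj1 (Nat.find hc) (Nat.find_spec hc)
          (fun i' h => Nat.find_min hc h)
        have hspec := Nat.find_spec hc
        have hi2 : 2 ≤ Nat.find hc := hspec.1
        have him' : Nat.find hc + 1 ≤ m j := hspec.2.1
        rcases Nat.lt_or_ge i (Nat.find hc) with h | h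
        · rw [hcopy i (by omega), hcopy (i+1) (by omega)]
          exact ih hj1 i hi (by omega)
        · have hii : i = Nat.find hc := by omega
          rw [hii, hnew, hcopy (Nat.find hc) le_rfl]
          have h1 := W1 (z (Nat.find hc) j) (S (z (m j) j)) q (1/2) half
          have h2 : dist q (S (z (m j) j)) ≤ dist (z (m j) j) q := by
            rw [dist_comm]; exact hS_nonexp _ q hq
          have h3 : dist (z (m j) j) q ≤ dist (z (Nat.find hc) j) q :=
            chain (Nat.find hc) (m j) (by omega) (by omega) le_rfl
          rw [dist_comm, dist_comm q (z (Nat.find hc) j)] at h1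
          linarith
      · push_neg at hc
        obtain ⟨hmj1, hcopy, hnew⟩ := hstepII j hj1 hc
        rcases Nat.lt_or_ge (i+1) (m j + 1) with h | h
        · rw [hcopy i (by omega), hcopy (i+1) (by omega)]
          exact ih hj1 i hi (by omega)
        · have hii : i = m j := by omega
          rw [hii, hnew, hcopy (m j) le_rfl]
          have h1 := W1 (z (m j) j) (S (z (m j) j)) q (1/2) half
          have h2 : dist q (S (z (m j) j)) ≤ dist (z (m j) j) q := by
            rw [dist_comm]; exact hS_nonexp _ q hq
          rw [dist_comm, dist_comm q (z (m j) j)] at h1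
          linarith
  have chain : ∀ q : X, S q = q → ∀ j, 1 ≤ j → ∀ a c : ℕ, 1 ≤ a → a ≤ c → c ≤ m j →
      dist (z c j) q ≤ dist (z a j) q := by
    intro q hq j hj a c ha hac hcm
    induction c with
    | zero => omega
    | succ c ihc =>
      rcases Nat.lt_or_ge a (c+1) with h | h
      · calc dist (z (c+1) j) q ≤ dist (z c j) q := key q hq j hj c (by omega) (by omega)
          _ ≤ dist (z a j) q := ihc (by omega) (by omega)
      · have : a = c + 1 := by omega
        rw [this]
  have ple : ∀ k, 1 ≤ k → 1 ≤ p k := by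
    intro k hk
    induction k with
    | zero => omega
    | succ k ih =>
      rcases Nat.eq_zero_or_pos k with h | h
      · subst h; rw [show (0+1 : ℕ) = 1 from rfl, hp1]
      · exact le_trans (ih h) (le_of_lt (hp_mono k h))
  have part1 : ∀ q : X, S q = q → ∀ k : ℕ, 1 ≤ k → ∀ n, p k ≤ n →
      dist (z (m n) n) q ≤ dist (z k (p k)) q := by
    intro q hq k hk n hn
    rcases eq_or_lt_of_le hn with heq | hlt
    · subst heq; rw [hp_m k hk]
    · have hn1 : 1 ≤ n := le_trans (ple k hk) (le_of_lt hlt)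
      have hgrow : k + 1 ≤ m n := hp_grow k hk n (by omega)
      have hstab : z k n = z k (p k) := hp_stab k hk n (le_of_lt hlt)
      calc dist (z (m n) n) q ≤ dist (z k n) q :=
            chain q hq n hn1 k (m n) hk (by omega) le_rfl
        _ = dist (z k (p k)) q := by rw [hstab]
  refine ⟨part1, ?_⟩
  intro pstar hfix htend
  rw [Metric.tendsto_atTop] at htend ⊢
  intro ε hε
  obtain ⟨K, hK⟩ := htend ε hε
  refine ⟨p (max K 1), fun n hn => ?_⟩
  calc dist (z (m n) n) pstar ≤ dist (z (max K 1) (p (max K 1))) pstar :=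
        part1 pstar hfix (max K 1) (le_max_right _ _) n hn
    _ < ε := hK (max K 1) (le_max_left _ _)
end

section
/- In the Moloney-type iteration, if n ≥ 2 and d(x_n, x_{n+1}) < d(x_n, x_{n−1}), then for all u ≥ p_{n+1}, d(x_n, y_u) ≤ 2·d(x_n, x_{n−1}). -/
open Filter Topology

theorem stmt16 {X : Type*} [MetricSpace X] [CompleteSpace X] [Nonempty X]
    (W : X → X → ℝ → X)
    (W1 : ∀ x y z : X, ∀ t : ℝ, t ∈ Set.Icc (0:ℝ) 1 →
      dist z (W x y t) ≤ (1 - t) * dist z x + t * dist z y)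
    (W2 : ∀ x y : X, ∀ t s : ℝ, t ∈ Set.Icc (0:ℝ) 1 → s ∈ Set.Icc (0:ℝ) 1 →
      dist (W x y t) (W x y s) = |t - s| * dist x y)
    (W3 : ∀ x y : X, ∀ t : ℝ, t ∈ Set.Icc (0:ℝ) 1 → W x y t = W y x (1 - t))
    (W4 : ∀ x y z w : X, ∀ t : ℝ, t ∈ Set.Icc (0:ℝ) 1 →
      dist (W x z t) (W y w t) ≤ (1 - t) * dist x y + t * dist z w)
    (η : ℝ → ℝ → ℝ)
    (hη_range : ∀ r ε : ℝ, 0 < r → 0 < ε → η r ε ∈ Set.Ioc (0:ℝ) 1)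
    (hη_mod : ∀ r ε : ℝ, 0 < r → 0 < ε → ∀ a x y : X,
      dist x a ≤ r → dist y a ≤ r → ε * r ≤ dist x y →
      dist (W x y (1/2)) a ≤ (1 - η r ε) * r)
    (hη_mono : ∀ r s ε : ℝ, 0 < s → s ≤ r → 0 < ε → η r ε ≤ η s ε)
    (b : ℝ) (hb : 0 < b) (hbd : ∀ x y : X, dist x y ≤ b)
    (S : X → X) (x0 : X)
    (hfix_ne : ∃ p : X, S p = p)
    (hS_nonexp : ∀ (x p : X), S p = p → dist (S x) p ≤ dist x p)
    (z : ℕ → ℕ → X) (m : ℕ → ℕ)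
    (hm1 : m 1 = 1) (hz11 : z 1 1 = x0)
    (hm_ge : ∀ j, 1 ≤ j → 1 ≤ m j)
    (hstepI : ∀ j, 1 ≤ j → ∀ i : ℕ, CaseI W S z m j i →
      (∀ i' < i, ¬ CaseI W S z m j i') →
      m (j+1) = i + 1 ∧ (∀ q ≤ i, z q (j+1) = z q j) ∧
        z (i+1) (j+1) = W (z i j) (S (z (m j) j)) (1/2))
    (hstepII : ∀ j, 1 ≤ j → (∀ i : ℕ, ¬ CaseI W S z m j i) →
      m (j+1) = m j + 1 ∧ (∀ q ≤ m j, z q (j+1) = z q j) ∧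
        z (m j + 1) (j+1) = W (z (m j) j) (S (z (m j) j)) (1/2))
    (p : ℕ → ℕ)
    (hp1 : p 1 = 1)
    (hp_mono : ∀ k, 1 ≤ k → p k < p (k+1))
    (hp_m : ∀ k, 1 ≤ k → m (p k) = k)
    (hp_stab : ∀ k, 1 ≤ k → ∀ j, p k ≤ j → z k j = z k (p k))
    (hp_grow : ∀ k, 1 ≤ k → ∀ j, p k + 1 ≤ j → k + 1 ≤ m j) :
    ∀ n : ℕ, 2 ≤ n →
      dist (z n (p n)) (z (n+1) (p (n+1))) < dist (z n (p n)) (z (n-1) (p (n-1))) →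
      ∀ u, p (n+1) ≤ u →
        dist (z n (p n)) (z (m u) u) ≤ 2 * dist (z n (p n)) (z (n-1) (p (n-1))) := by
  classical
  intro n hn hlt u hu
  have hn1 : 1 ≤ n := by omega
  have hr0 : 0 ≤ dist (z n (p n)) (z (n-1) (p (n-1))) := dist_nonneg
  -- basic facts about p
  have hp_pos : ∀ k, 1 ≤ k → 1 ≤ p k := by
    intro k hk
    induction k with
    | zero => omega
    | succ k ih =>
      rcases Nat.eq_or_lt_of_le hk with h | h
      · rw [← h, hp1]
      · have hk1 : 1 ≤ k := by omega
        have h1 := hp_mono k hk1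
        have h2 := ih hk1
        omega
  have hpn_lt : p n < p (n+1) := hp_mono n hn1
  have hpn1_lt : p (n-1) < p n := by
    have := hp_mono (n-1) (by omega)
    rwa [Nat.sub_add_cancel hn1] at this
  -- W basics
  have hhalf : (1:ℝ)/2 ∈ Set.Icc (0:ℝ) 1 := by norm_num
  have hW0 : ∀ x y : X, W x y 0 = x := by
    intro x y
    have h := W1 x y x 0 ⟨le_refl 0, zero_le_one⟩
    simp at h
    exact h.symm
  have hWhalf : ∀ x y : X, dist x (W x y (1/2)) = (1/2) * dist x y := by
    intro x y
    have h := W2 x y 0 (1/2) ⟨le_refl 0, zero_le_one⟩ hhalf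
    rw [hW0] at h
    rw [h]
    norm_num
  have hW1half : ∀ x y w : X,
      dist w (W x y (1/2)) ≤ (1/2) * dist w x + (1/2) * dist w y := by
    intro x y w
    have h := W1 x y w (1/2) hhalf
    norm_num at h
    linarith
  -- stability of rows
  have hstabn : ∀ v, p (n+1) ≤ v → z n v = z n (p n) :=
    fun v hv => hp_stab n hn1 v (by omega)
  have hstabn1 : ∀ v, p (n+1) ≤ v → z (n+1) v = z (n+1) (p (n+1)) :=
    fun v hv => hp_stab (n+1) (by omega) v hv
  have hstabn2 : ∀ v, p (n+1) ≤ v → z (n-1) v = z (n-1) (p (n-1)) :=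
    fun v hv => hp_stab (n-1) (by omega) v (by omega)
  have hv1' : 1 ≤ p (n+1) := hp_pos (n+1) (by omega)
  -- the auxiliary fact: 2 d(x_n, x_{n-1}) ≥ d(x_n, S y_v) for v ≥ p (n+1)
  have haux : ∀ v, p (n+1) ≤ v →
      dist (z n (p n)) (S (z (m v) v)) ≤ 2 * dist (z n (p n)) (z (n-1) (p (n-1))) := by
    intro v hv
    by_contra hcon
    push_neg at hcon
    have hv1 : 1 ≤ v := le_trans hv1' hv
    have hmn : n + 1 ≤ m v := hp_grow n hn1 v (by omega)
    have hCn : CaseI W S z m v n := by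
      refine ⟨hn, hmn, ?_, ?_⟩
      · rw [hstabn v hv, hstabn1 v hv, hstabn2 v hv]
        exact hlt
      · rw [hstabn v hv, hstabn2 v hv, hWhalf]
        linarith
    have hex : ∃ i, CaseI W S z m v i := ⟨n, hCn⟩
    obtain ⟨hmv1, -, -⟩ := hstepI v hv1 (Nat.find hex) (Nat.find_spec hex)
      (fun i' h => Nat.find_min hex h)
    have hi0n : Nat.find hex ≤ n := Nat.find_min' hex hCn
    have hge := hp_grow (n+1) (by omega) (v+1) (by omega)
    omega
  -- main induction
  have hmain : ∀ v, p (n+1) ≤ v → ∀ i, n ≤ i → i ≤ m v →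
      dist (z n (p n)) (z i v) ≤ 2 * dist (z n (p n)) (z (n-1) (p (n-1))) := by
    intro v hv
    induction v, hv using Nat.le_induction with
    | base =>
      intro i hi hi'
      have hmp : m (p (n+1)) = n + 1 := hp_m (n+1) (by omega)
      have : i = n ∨ i = n + 1 := by omega
      rcases this with h | h
      · rw [h, hstabn (p (n+1)) le_rfl]
        simp
      · rw [h]
        linarith
    | succ v hv ih =>
      intro i hi hi'
      have hv1 : 1 ≤ v := le_trans hv1' hv
      have hy := haux v hv
      have hmn : n + 1 ≤ m v := hp_grow n hn1 v (by omega)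
      by_cases hcase : ∃ j, CaseI W S z m v j
      · obtain ⟨hmv1, hkeep, htop⟩ := hstepI v hv1 (Nat.find hcase) (Nat.find_spec hcase)
          (fun i' h => Nat.find_min hcase h)
        have hge : n + 2 ≤ m (v+1) := hp_grow (n+1) (by omega) (v+1) (by omega)
        have hi0 : n + 1 ≤ Nat.find hcase := by omega
        have hi0mv : Nat.find hcase + 1 ≤ m v := (Nat.find_spec hcase).2.1
        rcases Nat.lt_or_ge i (Nat.find hcase + 1) with h | h
        · rw [hkeep i (by omega)]
          exact ih i hi (by omega)
        · have hieq : i = Nat.find hcase + 1 := by omega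
          rw [hieq, htop]
          have h1 := hW1half (z (Nat.find hcase) v) (S (z (m v) v)) (z n (p n))
          have h2 := ih (Nat.find hcase) (by omega) (by omega)
          linarith
      · push_neg at hcase
        obtain ⟨hmv1, hkeep, htop⟩ := hstepII v hv1 hcase
        rcases Nat.lt_or_ge i (m v + 1) with h | h
        · rw [hkeep i (by omega)]
          exact ih i hi (by omega)
        · have hieq : i = m v + 1 := by omega
          rw [hieq, htop]
          have h1 := hW1half (z (m v) v) (S (z (m v) v)) (z n (p n))
          have h2 := ih (m v) (by omega) le_rfl
          linarith
  have hmu : n + 1 ≤ m u := hp_grow n hn1 u (by omega)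
  exact hmain u hu (m u) (by omega) le_rfl
end

section
/- In the Moloney-type iteration, the full sequence (y_n) is Cauchy, and lim_{n→∞} d(y_n, S y_n) = 0; hence its limit is a fixed point of S. -/
open Filter Topology

theorem stmt17 {X : Type*} [MetricSpace X] [CompleteSpace X] [Nonempty X]
    (W : X → X → ℝ → X)
    (W1 : ∀ x y z : X, ∀ t : ℝ, t ∈ Set.Icc (0:ℝ) 1 →
      dist z (W x y t) ≤ (1 - t) * dist z x + t * dist z y)
    (W2 : ∀ x y : X, ∀ t s : ℝ, t ∈ Set.Icc (0:ℝ) 1 → s ∈ Set.Icc (0:ℝ) 1 →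
      dist (W x y t) (W x y s) = |t - s| * dist x y)
    (W3 : ∀ x y : X, ∀ t : ℝ, t ∈ Set.Icc (0:ℝ) 1 → W x y t = W y x (1 - t))
    (W4 : ∀ x y z w : X, ∀ t : ℝ, t ∈ Set.Icc (0:ℝ) 1 →
      dist (W x z t) (W y w t) ≤ (1 - t) * dist x y + t * dist z w)
    (η : ℝ → ℝ → ℝ)
    (hη_range : ∀ r ε : ℝ, 0 < r → 0 < ε → η r ε ∈ Set.Ioc (0:ℝ) 1)
    (hη_mod : ∀ r ε : ℝ, 0 < r → 0 < ε → ∀ a x y : X,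
      dist x a ≤ r → dist y a ≤ r → ε * r ≤ dist x y →
      dist (W x y (1/2)) a ≤ (1 - η r ε) * r)
    (hη_mono : ∀ r s ε : ℝ, 0 < s → s ≤ r → 0 < ε → η r ε ≤ η s ε)
    (b : ℝ) (hb : 0 < b) (hbd : ∀ x y : X, dist x y ≤ b)
    (S : X → X) (x0 : X)
    (hfix_ne : ∃ p : X, S p = p)
    (hS_nonexp : ∀ (x p : X), S p = p → dist (S x) p ≤ dist x p)
    (z : ℕ → ℕ → X) (m : ℕ → ℕ)
    (hm1 : m 1 = 1) (hz11 : z 1 1 = x0)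
    (hm_ge : ∀ j, 1 ≤ j → 1 ≤ m j)
    (hstepI : ∀ j, 1 ≤ j → ∀ i : ℕ, CaseI W S z m j i →
      (∀ i' < i, ¬ CaseI W S z m j i') →
      m (j+1) = i + 1 ∧ (∀ q ≤ i, z q (j+1) = z q j) ∧
        z (i+1) (j+1) = W (z i j) (S (z (m j) j)) (1/2))
    (hstepII : ∀ j, 1 ≤ j → (∀ i : ℕ, ¬ CaseI W S z m j i) →
      m (j+1) = m j + 1 ∧ (∀ q ≤ m j, z q (j+1) = z q j) ∧
        z (m j + 1) (j+1) = W (z (m j) j) (S (z (m j) j)) (1/2))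
    (p : ℕ → ℕ)
    (hp1 : p 1 = 1)
    (hp_mono : ∀ k, 1 ≤ k → p k < p (k+1))
    (hp_m : ∀ k, 1 ≤ k → m (p k) = k)
    (hp_stab : ∀ k, 1 ≤ k → ∀ j, p k ≤ j → z k j = z k (p k))
    (hp_grow : ∀ k, 1 ≤ k → ∀ j, p k + 1 ≤ j → k + 1 ≤ m j)
    (hdemi : ∀ (u : ℕ → X) (x : X),
      Filter.Tendsto u Filter.atTop (nhds x) →
      Filter.Tendsto (fun n => dist (u n) (S (u n))) Filter.atTop (nhds 0) →
      S x = x) :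
    CauchySeq (fun n => z (m n) n) ∧
      Filter.Tendsto (fun n => dist (z (m n) n) (S (z (m n) n))) Filter.atTop (nhds 0) ∧
      ∀ l : X, Filter.Tendsto (fun n => z (m n) n) Filter.atTop (nhds l) → S l = l := by
  classical
  obtain ⟨pt, hpt⟩ := hfix_ne
  have half_mem : (1/2 : ℝ) ∈ Set.Icc (0:ℝ) 1 := by constructor <;> norm_num
  have W0 : ∀ a c : X, W a c 0 = a := by
    intro a c
    have h := W1 a c a 0 (by constructor <;> norm_num)
    simp at h
    exact h.symm
  have Whalf : ∀ a c : X, dist a (W a c (1/2)) = (1/2) * dist a c := by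
    intro a c
    have h := W2 a c 0 (1/2) (by constructor <;> norm_num) half_mem
    rw [W0 a c] at h
    rw [h]
    rw [show |(0:ℝ) - 1/2| = 1/2 by rw [abs_sub_comm]; norm_num]
  have Wmid : ∀ a c w : X, dist w (W a c (1/2)) ≤ (dist w a + dist w c) / 2 := by
    intro a c w
    have h := W1 a c w (1/2) half_mem
    linarith
  have hSp : ∀ w : X, dist (S w) pt ≤ dist w pt := fun w => hS_nonexp w pt hpt
  have p_mono : ∀ k, 1 ≤ k → ∀ l, k ≤ l → p k ≤ p l := by
    intro k hk l hl
    induction l, hl using Nat.le_induction with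
    | base => exact le_refl _
    | succ n hn ih => exact le_trans ih (le_of_lt (hp_mono n (le_trans hk hn)))
  have p_pos : ∀ k, 1 ≤ k → 1 ≤ p k := by
    intro k hk
    have h := p_mono 1 le_rfl k hk
    rw [hp1] at h
    exact h
  have stepStruct : ∀ j, 1 ≤ j → ∃ i0, 1 ≤ i0 ∧ i0 ≤ m j ∧ m (j+1) = i0 + 1 ∧
      (∀ q ≤ i0, z q (j+1) = z q j) ∧
      z (i0+1) (j+1) = W (z i0 j) (S (z (m j) j)) (1/2) := by
    intro j hj
    by_cases hex : ∃ i, CaseI W S z m j i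
    · have hc := Nat.find_spec hex
      obtain ⟨hm', hcopy, hnew⟩ := hstepI j hj (Nat.find hex) hc
        (fun i' hi' => Nat.find_min hex hi')
      have h1 : 2 ≤ Nat.find hex := hc.1
      have h2 : Nat.find hex + 1 ≤ m j := hc.2.1
      exact ⟨Nat.find hex, by omega, by omega, hm', hcopy, hnew⟩
    · push_neg at hex
      obtain ⟨hm', hcopy, hnew⟩ := hstepII j hj hex
      exact ⟨m j, hm_ge j hj, le_rfl, hm', hcopy, hnew⟩
  have rowMono : ∀ j, 1 ≤ j → ∀ i i', 1 ≤ i → i ≤ i' → i' ≤ m j →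
      dist (z i' j) pt ≤ dist (z i j) pt := by
    intro j hj
    induction j, hj using Nat.le_induction with
    | base =>
      intro i i' hi hii' hi'
      rw [hm1] at hi'
      have h : i = i' := by omega
      rw [h]
    | succ j hj ih =>
      obtain ⟨i0, hi01, hi0m, hm', hcopy, hnew⟩ := stepStruct j hj
      intro i i' hi hii' hi'
      rw [hm'] at hi'
      have hnewbound : dist (z (i0+1) (j+1)) pt ≤ dist (z i0 j) pt := by
        have h1 := Wmid (z i0 j) (S (z (m j) j)) pt
        have h2 : dist (S (z (m j) j)) pt ≤ dist (z i0 j) pt :=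
          le_trans (hSp _) (ih i0 (m j) hi01 hi0m le_rfl)
        have e1 : dist (z (i0+1) (j+1)) pt = dist pt (W (z i0 j) (S (z (m j) j)) (1/2)) := by
          rw [hnew, dist_comm]
        rw [e1]
        rw [dist_comm pt (z i0 j), dist_comm pt (S (z (m j) j))] at h1
        linarith
      rcases Nat.lt_or_ge i' (i0+1) with h | h
      · rw [hcopy i' (by omega), hcopy i (by omega)]
        exact ih i i' hi hii' (by omega)
      · have hi'eq : i' = i0 + 1 := by omega
        rw [hi'eq]
        rcases Nat.lt_or_ge i (i0+1) with h2 | h2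
        · have h3 : dist (z i0 j) pt ≤ dist (z i (j+1)) pt := by
            rw [hcopy i (by omega)]
            exact ih i i0 hi (by omega) hi0m
          exact le_trans hnewbound h3
        · have h4 : i = i0 + 1 := by omega
          rw [h4]
  have key : ∀ k, 1 ≤ k →
      z (k+1) (p (k+1)) = W (z k (p k)) (S (z (m (p (k+1) - 1)) (p (k+1) - 1))) (1/2) ∧
      dist (z (m (p (k+1) - 1)) (p (k+1) - 1)) pt ≤ dist (z k (p k)) pt ∧
      ((p (k+1) = p k + 1 ∧ z (k+1) (p (k+1)) = W (z k (p k)) (S (z k (p k))) (1/2)) ∨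
       (0 < dist (z k (p k)) (z (k-1) (p (k-1))) ∧
        dist (z k (p k)) (z (k-1) (p (k-1))) ≤ dist (z k (p k)) (z (k+1) (p (k+1))))) := by
    intro k hk
    have hpk1 : 1 ≤ p k := p_pos k hk
    have hpklt : p k < p (k+1) := hp_mono k hk
    set j := p (k+1) - 1 with hjdef
    have hj2 : j + 1 = p (k+1) := by omega
    have hj1 : p k ≤ j := by omega
    have hjpos : 1 ≤ j := by omega
    have hmj1 : m (j+1) = k + 1 := by rw [hj2]; exact hp_m (k+1) (by omega)
    have hkmj : k ≤ m j := by
      rcases eq_or_lt_of_le hj1 with h | h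
      · rw [← h, hp_m k hk]
      · have hg := hp_grow k hk j (by omega)
        omega
    have hyle : dist (z (m j) j) pt ≤ dist (z k (p k)) pt := by
      have h := rowMono j hjpos k (m j) hk hkmj le_rfl
      rwa [hp_stab k hk j hj1] at h
    by_cases hex : ∃ i, CaseI W S z m j i
    · have hc := Nat.find_spec hex
      obtain ⟨hm', hcopy, hnew⟩ := hstepI j hjpos (Nat.find hex) hc
        (fun i' hi' => Nat.find_min hex hi')
      have hfk : Nat.find hex = k := by omega
      rw [hfk] at hc hnew
      obtain ⟨h2k, hk1m, hc3, hc4⟩ := hc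
      have hzkj : z k j = z k (p k) := hp_stab k hk j hj1
      rw [hj2, hzkj] at hnew
      have hzk1j : z (k-1) j = z (k-1) (p (k-1)) := hp_stab (k-1) (by omega) j
        (le_trans (p_mono (k-1) (by omega) k (by omega)) hj1)
      rw [hzkj, hzk1j] at hc3
      rw [hzkj, hzk1j] at hc4
      rw [← hnew] at hc4
      exact ⟨hnew, hyle, Or.inr ⟨lt_of_le_of_lt dist_nonneg hc3, hc4⟩⟩
    · push_neg at hex
      obtain ⟨hm', hcopy, hnew⟩ := hstepII j hjpos hex
      have hmjk : m j = k := by omega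
      have hjpk : j = p k := by
        by_contra hne
        have hge : p k + 1 ≤ j := by omega
        have := hp_grow k hk j hge
        omega
      rw [hmjk, hj2, hjpk] at hnew
      have hpp : p (k+1) = p k + 1 := by omega
      refine ⟨?_, hyle, Or.inl ⟨hpp, hnew⟩⟩
      rw [hnew, hmjk, hjpk]
  have rho_anti : ∀ k, 1 ≤ k → dist (z (k+1) (p (k+1))) pt ≤ dist (z k (p k)) pt := by
    intro k hk
    obtain ⟨h1, h2, -⟩ := key k hk
    have h4 : dist (S (z (m (p (k+1) - 1)) (p (k+1) - 1))) pt ≤ dist (z k (p k)) pt :=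
      le_trans (hSp _) h2
    have h3 := Wmid (z k (p k)) (S (z (m (p (k+1) - 1)) (p (k+1) - 1))) pt
    rw [h1, dist_comm]
    refine le_trans h3 ?_
    rw [dist_comm pt (z k (p k)), dist_comm pt (S (z (m (p (k+1) - 1)) (p (k+1) - 1)))]
    linarith
  have hx_eq : ∀ k, 1 ≤ k → dist (z k (p k)) (z (k+1) (p (k+1))) =
      (1/2) * dist (z k (p k)) (S (z (m (p (k+1) - 1)) (p (k+1) - 1))) := by
    intro k hk
    rw [(key k hk).1]
    exact Whalf _ _
  have hA : Tendsto (fun n => dist (z n (p n)) (z (n+1) (p (n+1)))) atTop (nhds 0) := by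
    set ρ : ℕ → ℝ := fun k => dist (z (k+1) (p (k+1))) pt with hρdef
    have hanti : Antitone ρ := antitone_nat_of_succ_le (fun k => rho_anti (k+1) (by omega))
    have hnn : ∀ k, (0:ℝ) ≤ ρ k := fun k => dist_nonneg
    have hbdd : BddBelow (Set.range ρ) := ⟨0, fun r ⟨k, hkr⟩ => hkr ▸ hnn k⟩
    have hLtend : Tendsto ρ atTop (nhds (⨅ k, ρ k)) := tendsto_atTop_ciInf hanti hbdd
    have hL0 : (0:ℝ) ≤ ⨅ k, ρ k := le_ciInf hnn
    have hLle : ∀ k, (⨅ k, ρ k) ≤ ρ k := fun k => ciInf_le hbdd k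
    set g : ℕ → ℝ := fun k =>
      dist (z (k+1) (p (k+1))) (S (z (m (p (k+1+1) - 1)) (p (k+1+1) - 1))) with hgdef
    have hgnn : ∀ k, (0:ℝ) ≤ g k := fun k => dist_nonneg
    have hgle : ∀ k, g k ≤ 2 * ρ k := by
      intro k
      have h2 := (key (k+1) (by omega)).2.1
      have h4 : dist (S (z (m (p (k+1+1) - 1)) (p (k+1+1) - 1))) pt ≤ ρ k :=
        le_trans (hSp _) h2
      have htri := dist_triangle (z (k+1) (p (k+1))) pt
        (S (z (m (p (k+1+1) - 1)) (p (k+1+1) - 1)))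
      have e : dist pt (S (z (m (p (k+1+1) - 1)) (p (k+1+1) - 1)))
          = dist (S (z (m (p (k+1+1) - 1)) (p (k+1+1) - 1))) pt := dist_comm _ _
      show dist (z (k+1) (p (k+1))) (S (z (m (p (k+1+1) - 1)) (p (k+1+1) - 1))) ≤ 2 * ρ k
      have hρk : ρ k = dist (z (k+1) (p (k+1))) pt := rfl
      linarith
    have hgtend : Tendsto g atTop (nhds 0) := by
      rcases eq_or_lt_of_le hL0 with hL0' | hL0'
      · have h2ρ : Tendsto (fun k => 2 * ρ k) atTop (nhds 0) := by
          have h := Filter.Tendsto.const_mul (2:ℝ) hLtend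
          rw [← hL0'] at h
          simpa using h
        exact squeeze_zero hgnn hgle h2ρ
      · by_contra hng
        rw [Metric.tendsto_atTop] at hng
        push_neg at hng
        obtain ⟨ε, hε, hfreq⟩ := hng
        have hR : (0:ℝ) < ρ 0 := lt_of_lt_of_le hL0' (hLle 0)
        have hεR : 0 < ε / ρ 0 := div_pos hε hR
        have hcpos : 0 < η (ρ 0) (ε / ρ 0) := (hη_range (ρ 0) (ε / ρ 0) hR hεR).1
        have drop : ∀ k, ε ≤ g k → ρ (k+1) ≤ ρ k - η (ρ 0) (ε / ρ 0) * (⨅ k, ρ k) := by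
          intro k hεg
          have hρk : (0:ℝ) < ρ k := lt_of_lt_of_le hL0' (hLle k)
          have hρkR : ρ k ≤ ρ 0 := hanti (Nat.zero_le k)
          have h2 := (key (k+1) (by omega)).2.1
          have h4 : dist (S (z (m (p (k+1+1) - 1)) (p (k+1+1) - 1))) pt ≤ ρ k :=
            le_trans (hSp _) h2
          have h3 : (ε / ρ 0) * ρ k ≤
              dist (z (k+1) (p (k+1))) (S (z (m (p (k+1+1) - 1)) (p (k+1+1) - 1))) := by
            have hm1 : (ε / ρ 0) * ρ k ≤ (ε / ρ 0) * ρ 0 :=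
              mul_le_mul_of_nonneg_left hρkR (le_of_lt hεR)
            rw [div_mul_cancel₀ ε (ne_of_gt hR)] at hm1
            exact le_trans hm1 hεg
          have h1 : dist (z (k+1) (p (k+1))) pt ≤ ρ k := le_rfl
          have h5 := hη_mod (ρ k) (ε / ρ 0) hρk hεR pt (z (k+1) (p (k+1)))
            (S (z (m (p (k+1+1) - 1)) (p (k+1+1) - 1))) h1 h4 h3
          rw [← (key (k+1) (by omega)).1] at h5
          have h5' : ρ (k+1) ≤ (1 - η (ρ k) (ε / ρ 0)) * ρ k := h5
          have h6 : η (ρ 0) (ε / ρ 0) ≤ η (ρ k) (ε / ρ 0) := hη_mono (ρ 0) (ρ k) (ε / ρ 0) hρk hρkR hεR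
          have h8 : η (ρ 0) (ε / ρ 0) * (⨅ k, ρ k) ≤ η (ρ k) (ε / ρ 0) * ρ k :=
            mul_le_mul h6 (hLle k) hL0 ((hη_range (ρ k) (ε / ρ 0) hρk hεR).1.le)
          nlinarith
        have iter : ∀ M : ℕ, ∃ k, ρ k ≤ ρ 0 - M * (η (ρ 0) (ε / ρ 0) * (⨅ k, ρ k)) := by
          intro M
          induction M with
          | zero => exact ⟨0, by norm_num⟩
          | succ n ihn =>
            obtain ⟨k, hk⟩ := ihn
            obtain ⟨k', hk'1, hk'2⟩ := hfreq k
            rw [Real.dist_eq, sub_zero, abs_of_nonneg (hgnn k')] at hk'2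
            have hd := drop k' hk'2
            have hmono : ρ k' ≤ ρ k := hanti hk'1
            exact ⟨k'+1, by push_cast; linarith⟩
        obtain ⟨M, hM⟩ := exists_nat_gt (ρ 0 / (η (ρ 0) (ε / ρ 0) * (⨅ k, ρ k)))
        obtain ⟨k, hk⟩ := iter M
        have hclpos : 0 < η (ρ 0) (ε / ρ 0) * (⨅ k, ρ k) := mul_pos hcpos hL0'
        rw [div_lt_iff₀ hclpos] at hM
        have := hnn k
        linarith
    have hA1 : Tendsto (fun k => dist (z (k+1) (p (k+1))) (z (k+1+1) (p (k+1+1)))) atTop (nhds 0) := by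
      have he : (fun k => dist (z (k+1) (p (k+1))) (z (k+1+1) (p (k+1+1)))) = fun k => (1/2) * g k := by
        funext k; exact hx_eq (k+1) (by omega)
      rw [he]
      have h := Filter.Tendsto.const_mul (1/2 : ℝ) hgtend
      simpa using h
    exact (tendsto_add_atTop_iff_nat 1).mp hA1
  have key2 : ∀ n, 2 ≤ n →
      dist (z n (p n)) (z (n+1) (p (n+1))) < dist (z n (p n)) (z (n-1) (p (n-1))) →
      ∀ u, p (n+1) ≤ u →
        dist (z n (p n)) (z (m u) u) ≤ 2 * dist (z n (p n)) (z (n-1) (p (n-1))) ∧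
        dist (z n (p n)) (S (z (m u) u)) ≤ 2 * dist (z n (p n)) (z (n-1) (p (n-1))) := by
    intro n hn hab
    have hn1 : 1 ≤ n := by omega
    have notCI : ∀ u, p (n+1) ≤ u → ¬ CaseI W S z m u n := by
      intro u hu hCI
      have hex : ∃ i, CaseI W S z m u i := ⟨n, hCI⟩
      have hupos : 1 ≤ u := le_trans (p_pos (n+1) (by omega)) hu
      obtain ⟨hm', -, -⟩ := hstepI u hupos (Nat.find hex) (Nat.find_spec hex)
        (fun i' hi' => Nat.find_min hex hi')
      have hle : Nat.find hex ≤ n := Nat.find_min' hex hCI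
      have hgrow := hp_grow (n+1) (by omega) (u+1) (by omega)
      omega
    have hSd : ∀ u, p (n+1) ≤ u →
        dist (z n (p n)) (S (z (m u) u)) ≤ 2 * dist (z n (p n)) (z (n-1) (p (n-1))) := by
      intro u hu
      have hzn : z n u = z n (p n) := hp_stab n hn1 u (le_trans (le_of_lt (hp_mono n hn1)) hu)
      have hzn1 : z (n+1) u = z (n+1) (p (n+1)) := hp_stab (n+1) (by omega) u hu
      have hzn'1 : z (n-1) u = z (n-1) (p (n-1)) := hp_stab (n-1) (by omega) u
        (le_trans (p_mono (n-1) (by omega) (n+1) (by omega)) hu)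
      have hc2 : n + 1 ≤ m u := hp_grow n hn1 u (by have := hp_mono n hn1; omega)
      have hc3 : dist (z n u) (z (n+1) u) < dist (z n u) (z (n-1) u) := by
        rw [hzn, hzn1, hzn'1]; exact hab
      have hCI' := notCI u hu
      unfold CaseI at hCI'
      push_neg at hCI'
      have h4 := hCI' hn hc2 hc3
      rw [hzn, hzn'1] at h4
      rw [Whalf] at h4
      linarith
    have rowB : ∀ u, p (n+1) ≤ u → ∀ q, n+1 ≤ q → q ≤ m u →
        dist (z n (p n)) (z q u) ≤ 2 * dist (z n (p n)) (z (n-1) (p (n-1))) := by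
      intro u hu
      induction u, hu using Nat.le_induction with
      | base =>
        intro q hq1 hq2
        rw [hp_m (n+1) (by omega)] at hq2
        have hq : q = n+1 := by omega
        rw [hq]
        have hd0 : (0:ℝ) ≤ dist (z n (p n)) (z (n-1) (p (n-1))) := dist_nonneg
        linarith
      | succ u hu ihu =>
        intro q hq1 hq2
        have hupos : 1 ≤ u := le_trans (p_pos (n+1) (by omega)) hu
        obtain ⟨i0, hi01, hi0m, hm', hcopy, hnew⟩ := stepStruct u hupos
        have hgrow := hp_grow (n+1) (by omega) (u+1) (by omega)
        have hi0n : n + 1 ≤ i0 := by omega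
        rw [hm'] at hq2
        rcases Nat.lt_or_ge q (i0+1) with hq | hq
        · rw [hcopy q (by omega)]
          exact ihu q hq1 (by omega)
        · have hq' : q = i0+1 := by omega
          rw [hq', hnew]
          have h1 := Wmid (z i0 u) (S (z (m u) u)) (z n (p n))
          have h2 := ihu i0 hi0n hi0m
          have h3 := hSd u hu
          linarith
    intro u hu
    exact ⟨rowB u hu (m u) (hp_grow n hn1 u (by have := hp_mono n hn1; omega)) le_rfl, hSd u hu⟩
  by_cases H : ∃ᶠ k in atTop, dist (z (k+1) (p (k+1))) (z (k+1+1) (p (k+1+1))) <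
      dist (z k (p k)) (z (k+1) (p (k+1)))
  · have main : ∀ ε : ℝ, 0 < ε → ∃ N, ∀ u, N ≤ u →
        dist (z (m u) u) (S (z (m u) u)) < ε ∧
        ∀ v, N ≤ v → dist (z (m u) u) (z (m v) v) < ε := by
      intro ε hε
      rw [Metric.tendsto_atTop] at hA
      obtain ⟨M, hM⟩ := hA (ε/5) (by linarith)
      rw [frequently_atTop] at H
      obtain ⟨k, hk, hklt⟩ := H (max M 1)
      have hkM : M ≤ k := le_trans (le_max_left _ _) hk
      have hk1 : 1 ≤ k := le_trans (le_max_right _ _) hk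
      have hAk : dist (z k (p k)) (z (k+1) (p (k+1))) < ε/5 := by
        have h := hM k hkM
        rwa [Real.dist_eq, sub_zero, abs_of_nonneg dist_nonneg] at h
      have hyp' : dist (z (k+1) (p (k+1))) (z (k+1+1) (p (k+1+1))) <
          dist (z (k+1) (p (k+1))) (z (k+1-1) (p (k+1-1))) := by
        rw [Nat.add_sub_cancel, dist_comm (z (k+1) (p (k+1))) (z k (p k))]
        exact hklt
      have h2 := key2 (k+1) (by omega) hyp'
      have hB : dist (z (k+1) (p (k+1))) (z (k+1-1) (p (k+1-1))) < ε/5 := by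
        rw [Nat.add_sub_cancel, dist_comm]
        exact hAk
      refine ⟨p (k+1+1), fun u hu => ?_⟩
      obtain ⟨hu1, hu2⟩ := h2 u hu
      constructor
      · have htri := dist_triangle (z (m u) u) (z (k+1) (p (k+1))) (S (z (m u) u))
        have e : dist (z (m u) u) (z (k+1) (p (k+1)))
            = dist (z (k+1) (p (k+1))) (z (m u) u) := dist_comm _ _
        linarith
      · intro v hv
        obtain ⟨hv1, -⟩ := h2 v hv
        have htri := dist_triangle (z (m u) u) (z (k+1) (p (k+1))) (z (m v) v)
        have e : dist (z (m u) u) (z (k+1) (p (k+1)))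
            = dist (z (k+1) (p (k+1))) (z (m u) u) := dist_comm _ _
        linarith
    have bullet2 : Tendsto (fun u => dist (z (m u) u) (S (z (m u) u))) atTop (nhds 0) := by
      rw [Metric.tendsto_atTop]
      intro ε hε
      obtain ⟨N, hN⟩ := main ε hε
      exact ⟨N, fun u hu => by
        rw [Real.dist_eq, sub_zero, abs_of_nonneg dist_nonneg]
        exact (hN u hu).1⟩
    have bullet1 : CauchySeq (fun u => z (m u) u) := by
      rw [Metric.cauchySeq_iff]
      intro ε hε
      obtain ⟨N, hN⟩ := main ε hε
      exact ⟨N, fun u hu v hv => (hN u hu).2 v hv⟩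
    exact ⟨bullet1, bullet2, fun l hl => hdemi _ l hl bullet2⟩
  · rw [Filter.not_frequently] at H
    rw [eventually_atTop] at H
    obtain ⟨M0, hM0⟩ := H
    set M := max M0 1 with hMdef
    have hM1 : 1 ≤ M := le_max_right _ _
    have hmono : ∀ k, M ≤ k → ∀ l, k ≤ l →
        dist (z k (p k)) (z (k+1) (p (k+1))) ≤ dist (z l (p l)) (z (l+1) (p (l+1))) := by
      intro k hk l hl
      induction l, hl using Nat.le_induction with
      | base => exact le_rfl
      | succ l hl ih =>
        refine le_trans ih ?_
        have h := hM0 l (le_trans (le_max_left _ _) (le_trans hk hl))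
        exact not_lt.mp h
    have hzero : ∀ k, M ≤ k → dist (z k (p k)) (z (k+1) (p (k+1))) = 0 := by
      intro k hk
      have hle : dist (z k (p k)) (z (k+1) (p (k+1))) ≤ 0 :=
        ge_of_tendsto hA (eventually_atTop.mpr ⟨k, fun l hl => hmono k hk l hl⟩)
      exact le_antisymm hle dist_nonneg
    have hconst : ∀ k, M ≤ k → z k (p k) = z M (p M) := by
      intro k hk
      induction k, hk using Nat.le_induction with
      | base => rfl
      | succ k hk ih =>
        rw [← ih]
        exact (eq_of_dist_eq_zero (hzero k hk)).symm
    have hAllA : ∀ n, M + 1 ≤ n → p (n+1) = p n + 1 ∧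
        z (n+1) (p (n+1)) = W (z n (p n)) (S (z n (p n))) (1/2) := by
      intro n hn
      obtain ⟨-, -, hAB⟩ := key n (by omega)
      rcases hAB with h | h
      · exact h
      · exfalso
        have h0 : dist (z n (p n)) (z (n-1) (p (n-1))) = 0 := by
          rw [hconst n (by omega), hconst (n-1) (by omega), dist_self]
        linarith [h.1]
    have hq : S (z M (p M)) = z M (p M) := by
      have h := (hAllA (M+1) le_rfl).2
      rw [hconst (M+1+1) (by omega), hconst (M+1) (by omega)] at h
      have h2 := Whalf (z M (p M)) (S (z M (p M)))
      rw [← h, dist_self] at h2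
      have h3 : dist (z M (p M)) (S (z M (p M))) = 0 := by linarith
      exact (eq_of_dist_eq_zero h3).symm
    have hpu : ∀ u, p (M+1) ≤ u → ∃ n, M + 1 ≤ n ∧ p n = u := by
      intro u hu
      induction u, hu using Nat.le_induction with
      | base => exact ⟨M+1, le_rfl, rfl⟩
      | succ u hu ih =>
        obtain ⟨n, hn, hpn⟩ := ih
        refine ⟨n+1, by omega, ?_⟩
        rw [(hAllA n hn).1, hpn]
    have hyconst : ∀ u, p (M+1) ≤ u → z (m u) u = z M (p M) := by
      intro u hu
      obtain ⟨n, hn, hpn⟩ := hpu u hu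
      rw [← hpn, hp_m n (by omega)]
      exact hconst n (by omega)
    have bullet2 : Tendsto (fun u => dist (z (m u) u) (S (z (m u) u))) atTop (nhds 0) := by
      have he : (fun u => dist (z (m u) u) (S (z (m u) u))) =ᶠ[atTop] (fun _ => (0:ℝ)) := by
        filter_upwards [eventually_ge_atTop (p (M+1))] with u hu
        rw [hyconst u hu, hq, dist_self]
      exact Tendsto.congr' he.symm tendsto_const_nhds
    have bullet1 : CauchySeq (fun u => z (m u) u) := by
      rw [Metric.cauchySeq_iff]
      intro ε hε
      refine ⟨p (M+1), fun u hu v hv => ?_⟩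
      rw [hyconst u hu, hyconst v hv, dist_self]
      exact hε
    exact ⟨bullet1, bullet2, fun l hl => hdemi _ l hl bullet2⟩
end
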